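/- arXiv:2108.10030 — 9 statements merged into one kernel-verified Lean document; each statement's English description precedes it below -/
import Mathlib

section
/- Let ρ₊, n₊, u₊, u₋, μ, A₁, A₂ > 0 and γ, α ≥ 1. Let ũ, ṽ : [0,∞) → ℝ be twice continuously differentiable, positive, with ũ(0) = ṽ(0) = u₋, ũ(x) → u₊, ṽ(x) → u₊, ũ_x(x) → 0, ṽ_x(x) → 0 as x → ∞, satisfying on (0,∞) the reduced stationary system (ρ₊u₊ũ + A₁ρ₊^γu₊^γ ũ^{−γ})_x = (μ ũ_x)_x + (n₊u₊/ṽ)(ṽ − ũ) and (n₊u₊ṽ + A₂n₊^αu₊^α ṽ^{−α})_x = (n₊u₊ ṽ_x/ṽ)_x − (n₊u₊/ṽ)(ṽ − ũ). Then the exact boundary flux identity holds: μ ũ_x(0) + (n₊u₊/u₋) ṽ_x(0) = ρ₊u₊(u₋ − u₊) + A₁ρ₊^γu₊^γ(u₋^{−γ} − u₊^{−γ}) + n₊u₊(u₋ − u₊) + A₂n₊^αu₊^α(u₋^{−α} − u₊^{−α}). -/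
/-!
Adding the two momentum equations cancels the drag terms `± (n₊u₊/ṽ)(ṽ − ũ)`, so the total
momentum flux of the mixture has zero derivative on `(0, ∞)`. It is therefore constant, equal
to its value at `x = 0` by continuity and to its limit as `x → ∞`, where `ũ, ṽ → u₊` and the
viscous terms vanish. Comparing the two values gives the identity.
-/

open Filter Topology Set

theorem eq_of_hasDerivAt_zero_of_tendsto_atTop {F : ℝ → ℝ} {a L : ℝ}
    (hcont : ContinuousOn F (Ici a)) (hderiv : ∀ x > a, HasDerivAt F 0 x)
    (hlim : Tendsto F atTop (𝓝 L)) : F a = L := by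
  have hconst : ∀ b > a, F b = F a := by
    intro b hb
    obtain ⟨c, -, hslope⟩ := exists_hasDerivAt_eq_slope F (fun _ => 0) hb
      (hcont.mono Icc_subset_Ici_self) fun x hx => hderiv x hx.1
    rw [eq_div_iff (sub_ne_zero.2 hb.ne'), zero_mul] at hslope
    linarith
  refine tendsto_nhds_unique (tendsto_const_nhds.congr' ?_) hlim
  filter_upwards [eventually_gt_atTop a] with b hb using (hconst b hb).symm

/-- The total momentum flux of the two phases. With `m = ρ₊u₊`, `n = n₊u₊`,
`K₁ = A₁ρ₊^γu₊^γ`, `K₂ = A₂n₊^αu₊^α`, the reduced system reads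
`(m u + K₁ u^(-γ))' = (μ u')' + (n / v)(v - u)` and
`(n v + K₂ v^(-α))' = (n v' / v)' - (n / v)(v - u)`. -/
noncomputable def mixtureFlux (m n K₁ K₂ μ γ α : ℝ) (u v : ℝ → ℝ) (x : ℝ) : ℝ :=
  m * u x + K₁ * u x ^ (-γ) + (n * v x + K₂ * v x ^ (-α)) - μ * deriv u x - n * deriv v x / v x

section MixtureFlux

variable {m n K₁ K₂ μ γ α : ℝ} {u v : ℝ → ℝ}

theorem differentiableAt_phaseFlux {K : ℝ} (hu : ContDiff ℝ 2 u) {x : ℝ} (hux : u x ≠ 0) :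
    DifferentiableAt ℝ (fun y => m * u y + K * u y ^ (-γ)) x :=
  have hd := (hu.differentiable two_ne_zero x)
  (hd.const_mul m).add ((hd.rpow_const (Or.inl hux)).const_mul K)

theorem hasDerivAt_mixtureFlux (hu : ContDiff ℝ 2 u) (hv : ContDiff ℝ 2 v) {x : ℝ}
    (hux : u x ≠ 0) (hvx : v x ≠ 0) :
    HasDerivAt (mixtureFlux m n K₁ K₂ μ γ α u v)
      (deriv (fun y => m * u y + K₁ * u y ^ (-γ)) x + deriv (fun y => n * v y + K₂ * v y ^ (-α)) x
        - deriv (fun y => μ * deriv u y) x - deriv (fun y => n * deriv v y / v y) x) x :=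
  have hu' := (hu.differentiable_deriv_two x).const_mul μ
  have hv' := ((hv.differentiable_deriv_two x).const_mul n).fun_div
    (hv.differentiable two_ne_zero x) hvx
  (((differentiableAt_phaseFlux hu hux).hasDerivAt.add
    (differentiableAt_phaseFlux hv hvx).hasDerivAt).sub hu'.hasDerivAt).sub hv'.hasDerivAt

theorem hasDerivAt_mixtureFlux_zero (hu : ContDiff ℝ 2 u) (hv : ContDiff ℝ 2 v) {x : ℝ}
    (hux : u x ≠ 0) (hvx : v x ≠ 0)
    (h₁ : deriv (fun y => m * u y + K₁ * u y ^ (-γ)) x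
      = deriv (fun y => μ * deriv u y) x + (n / v x) * (v x - u x))
    (h₂ : deriv (fun y => n * v y + K₂ * v y ^ (-α)) x
      = deriv (fun y => n * deriv v y / v y) x - (n / v x) * (v x - u x)) :
    HasDerivAt (mixtureFlux m n K₁ K₂ μ γ α u v) 0 x := by
  convert hasDerivAt_mixtureFlux hu hv hux hvx using 1
  rw [h₁, h₂]
  ring

theorem tendsto_mixtureFlux {c : ℝ} (hc : c ≠ 0) (hu : Tendsto u atTop (𝓝 c))
    (hv : Tendsto v atTop (𝓝 c)) (hu' : Tendsto (deriv u) atTop (𝓝 0))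
    (hv' : Tendsto (deriv v) atTop (𝓝 0)) :
    Tendsto (mixtureFlux m n K₁ K₂ μ γ α u v) atTop
      (𝓝 (m * c + K₁ * c ^ (-γ) + (n * c + K₂ * c ^ (-α)))) := by
  have hlim := ((((hu.const_mul m).add ((hu.rpow_const (p := -γ) (.inl hc)).const_mul K₁)).add
    ((hv.const_mul n).add ((hv.rpow_const (p := -α) (.inl hc)).const_mul K₂))).sub
    (hu'.const_mul μ)).sub ((hv'.const_mul n).div hv hc)
  rw [mul_zero, mul_zero, zero_div, sub_zero, sub_zero] at hlim
  exact hlim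

end MixtureFlux

theorem stmt1_general (ρp np up um μ A1 A2 γ α : ℝ)
    (hup : 0 < up)
    (ut vt : ℝ → ℝ) (huC2 : ContDiff ℝ 2 ut) (hvC2 : ContDiff ℝ 2 vt)
    (hupos : ∀ x ≥ (0:ℝ), 0 < ut x) (hvpos : ∀ x ≥ (0:ℝ), 0 < vt x)
    (hbu : ut 0 = um) (hbv : vt 0 = um)
    (hlu : Tendsto ut atTop (nhds up)) (hlv : Tendsto vt atTop (nhds up))
    (hlu' : Tendsto (deriv ut) atTop (nhds 0)) (hlv' : Tendsto (deriv vt) atTop (nhds 0))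
    (heq1 : ∀ x > (0:ℝ),
      deriv (fun y => ρp * up * ut y + A1 * ρp ^ γ * up ^ γ * (ut y) ^ (-γ)) x
        = deriv (fun y => μ * deriv ut y) x + (np * up / vt x) * (vt x - ut x))
    (heq2 : ∀ x > (0:ℝ),
      deriv (fun y => np * up * vt y + A2 * np ^ α * up ^ α * (vt y) ^ (-α)) x
        = deriv (fun y => np * up * deriv vt y / vt y) x - (np * up / vt x) * (vt x - ut x)) :
    μ * deriv ut 0 + (np * up / um) * deriv vt 0
      = ρp * up * (um - up) + A1 * ρp ^ γ * up ^ γ * (um ^ (-γ) - up ^ (-γ))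
        + np * up * (um - up) + A2 * np ^ α * up ^ α * (um ^ (-α) - up ^ (-α)) := by
  have hflux := eq_of_hasDerivAt_zero_of_tendsto_atTop
    (F := mixtureFlux (ρp * up) (np * up) (A1 * ρp ^ γ * up ^ γ) (A2 * np ^ α * up ^ α) μ γ α ut vt)
    (fun x hx => (hasDerivAt_mixtureFlux huC2 hvC2 (hupos x hx).ne'
      (hvpos x hx).ne').continuousAt.continuousWithinAt)
    (fun x hx => hasDerivAt_mixtureFlux_zero huC2 hvC2 (hupos x hx.le).ne' (hvpos x hx.le).ne'
      (heq1 x hx) (heq2 x hx))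
    (tendsto_mixtureFlux hup.ne' hlu hlv hlu' hlv')
  simp only [mixtureFlux, hbu, hbv] at hflux
  linear_combination -hflux

/-- exact boundary flux identity for the reduced stationary system. -/
theorem stmt1 (ρp np up um μ A1 A2 γ α : ℝ)
    (hρp : 0 < ρp) (hnp : 0 < np) (hup : 0 < up) (hum : 0 < um)
    (hμ : 0 < μ) (hA1 : 0 < A1) (hA2 : 0 < A2) (hγ : 1 ≤ γ) (hα : 1 ≤ α)
    (ut vt : ℝ → ℝ) (huC2 : ContDiff ℝ 2 ut) (hvC2 : ContDiff ℝ 2 vt)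
    (hupos : ∀ x ≥ (0:ℝ), 0 < ut x) (hvpos : ∀ x ≥ (0:ℝ), 0 < vt x)
    (hbu : ut 0 = um) (hbv : vt 0 = um)
    (hlu : Tendsto ut atTop (nhds up)) (hlv : Tendsto vt atTop (nhds up))
    (hlu' : Tendsto (deriv ut) atTop (nhds 0)) (hlv' : Tendsto (deriv vt) atTop (nhds 0))
    (heq1 : ∀ x > (0:ℝ),
      deriv (fun y => ρp * up * ut y + A1 * ρp ^ γ * up ^ γ * (ut y) ^ (-γ)) x
        = deriv (fun y => μ * deriv ut y) x + (np * up / vt x) * (vt x - ut x))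
    (heq2 : ∀ x > (0:ℝ),
      deriv (fun y => np * up * vt y + A2 * np ^ α * up ^ α * (vt y) ^ (-α)) x
        = deriv (fun y => np * up * deriv vt y / vt y) x - (np * up / vt x) * (vt x - ut x)) :
    μ * deriv ut 0 + (np * up / um) * deriv vt 0
      = ρp * up * (um - up) + A1 * ρp ^ γ * up ^ γ * (um ^ (-γ) - up ^ (-γ))
        + np * up * (um - up) + A2 * np ^ α * up ^ α * (um ^ (-α) - up ^ (-α)) :=
  stmt1_general ρp np up um μ A1 A2 γ α hup ut vt huC2 hvC2 hupos hvpos hbu hbv hlu hlv hlu' hlv'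
    heq1 heq2
end

section
/- Fix ρ₊, n₊, u₊, μ, A₁, A₂ > 0 and γ, α ≥ 1. There exist constants δ₀ > 0 and C > 0 (depending only on these parameters) such that: if 0 < δ = |u₊ − u₋| ≤ δ₀ with u₋ > 0, and ũ, ṽ : [0,∞) → ℝ are twice continuously differentiable, positive, bounded above and below by positive constants, with ũ(0) = ṽ(0) = u₋, ũ → u₊, ṽ → u₊, ũ_x → 0, ṽ_x → 0 at infinity, |ũ(x) − u₊| ≤ δ₀ and |ṽ(x) − u₊| ≤ δ₀ for all x, satisfying on (0,∞) the reduced stationary system (ρ₊u₊ũ + A₁ρ₊^γu₊^γ ũ^{−γ})_x = (μ ũ_x)_x + (n₊u₊/ṽ)(ṽ − ũ) and (n₊u₊ṽ + A₂n₊^αu₊^α ṽ^{−α})_x = (n₊u₊ ṽ_x/ṽ)_x − (n₊u₊/ṽ)(ṽ − ũ), then ∫₀^∞ ( μ ũ_x² + n₊u₊ ṽ_x²/ṽ + (n₊u₊/ṽ)(ṽ − ũ)² ) dx ≤ C δ². -/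
/-!
Write `F(w) = ρ₊u₊ w + A₁ρ₊^γu₊^γ w^{-γ}` and `G(w) = n₊u₊ w + A₂n₊^αu₊^α w^{-α}`, so that the
equations read `F(ũ)_x = (μ ũ_x)_x + g` and `G(ṽ)_x = (n₊u₊ ṽ_x/ṽ)_x - g` with
`g = (n₊u₊/ṽ)(ṽ - ũ)`.

Adding them, `F(ũ) + G(ṽ) - μ ũ_x - n₊u₊ ṽ_x/ṽ` is constant, equal to its limit `F(u₊) + G(u₊)`;
at `x = 0` this expresses the boundary fluxes through the jumps of `F` and `G`.
Testing the equations against `ũ - u₊` and `ṽ - u₊` turns the dissipation density into the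
derivative of `W = μ ũ_x (ũ - u₊) + (n₊u₊ ṽ_x/ṽ)(ṽ - u₊) - Φ_F(ũ) - Φ_G(ṽ)`, where
`Φ_F(w) = ∫_{u₊}^w F'(t)(t - u₊) dt`. The dissipation integral is therefore `-W(0)`, which by the
first integral equals `Φ_F(u₋) - (u₋ - u₊)(F(u₋) - F(u₊))` plus the same expression for `G`; both
are `O(δ²)` because `F'` and `G'` are bounded near `u₊`.
-/

open Filter Topology MeasureTheory Set

theorem contDiffOn_add_mul_rpow (a c e : ℝ) :
    ContDiffOn ℝ 1 (fun w : ℝ => a * w + c * w ^ e) (Ioi 0) := fun _ hw =>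
  ((contDiffAt_const.mul contDiffAt_id).add
    (contDiffAt_const.mul (Real.contDiffAt_rpow_const_of_ne hw.out.ne'))).contDiffWithinAt

theorem hasDerivAt_of_contDiffOn_Ioi {F : ℝ → ℝ} (hF : ContDiffOn ℝ 1 F (Ioi 0)) {w : ℝ}
    (hw : 0 < w) : HasDerivAt F (deriv F w) w :=
  ((hF.differentiableOn one_ne_zero w hw).differentiableAt (Ioi_mem_nhds hw)).hasDerivAt

noncomputable def energyPotential (F : ℝ → ℝ) (b u : ℝ) : ℝ :=
  ∫ t in b..u, deriv F t * (t - b)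

noncomputable def boundaryEnergy (F : ℝ → ℝ) (b u : ℝ) : ℝ :=
  energyPotential F b u - (u - b) * (F u - F b)

section EnergyPotential

variable {F : ℝ → ℝ} {b u M : ℝ}

@[simp]
theorem energyPotential_self : energyPotential F b b = 0 :=
  intervalIntegral.integral_same

theorem hasDerivAt_energyPotential (hF : ContDiffOn ℝ 1 F (Ioi 0)) (hb : 0 < b) (hu : 0 < u) :
    HasDerivAt (energyPotential F b) (deriv F u * (u - b)) u := by
  have hcont : ContinuousOn (fun t => deriv F t * (t - b)) (Ioi 0) :=
    (hF.continuousOn_deriv_of_isOpen isOpen_Ioi le_rfl).mul (continuousOn_id.sub continuousOn_const)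
  refine intervalIntegral.integral_hasDerivAt_right ?_
    (hcont.stronglyMeasurableAtFilter isOpen_Ioi u hu) (hcont.continuousAt (Ioi_mem_nhds hu))
  exact (hcont.mono fun t ht => (lt_min hb hu).trans_le ht.1).intervalIntegrable

theorem abs_energyPotential_le (hM : ∀ t ∈ uIcc b u, |deriv F t| ≤ M) :
    |energyPotential F b u| ≤ M * (u - b) ^ 2 := by
  have hbound : ∀ t ∈ uIoc b u, ‖deriv F t * (t - b)‖ ≤ M * |u - b| := fun t ht => by
    have ht' := uIoc_subset_uIcc ht
    rw [Real.norm_eq_abs, abs_mul]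
    exact mul_le_mul (hM t ht') (abs_sub_left_of_mem_uIcc ht') (abs_nonneg _)
      ((abs_nonneg _).trans (hM t ht'))
  calc |energyPotential F b u| ≤ M * |u - b| * |u - b| :=
        intervalIntegral.norm_integral_le_of_norm_le_const hbound
    _ = M * (u - b) ^ 2 := by rw [mul_assoc, abs_mul_abs_self, sq]

theorem exists_abs_boundaryEnergy_le (hF : ContDiffOn ℝ 1 F (Ioi 0)) (hb : 0 < b) :
    ∃ M, 0 ≤ M ∧ ∀ u, |u - b| ≤ b / 2 → |boundaryEnergy F b u| ≤ M * (u - b) ^ 2 := by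
  have hIcc : Icc (b / 2) (3 * b / 2) ⊆ Ioi 0 := fun t ht => (half_pos hb).trans_le ht.1
  obtain ⟨K, hK⟩ := isCompact_Icc.exists_bound_of_continuousOn
    ((hF.continuousOn_deriv_of_isOpen isOpen_Ioi le_rfl).mono hIcc)
  have hbK : b ∈ Icc (b / 2) (3 * b / 2) := ⟨by linarith, by linarith⟩
  refine ⟨2 * K, by linarith [(norm_nonneg _).trans (hK b hbK)], fun u hu => ?_⟩
  have hu' : u ∈ Icc (b / 2) (3 * b / 2) := by
    constructor <;> linarith [abs_le.mp hu]
  have hsub : uIcc b u ⊆ Icc (b / 2) (3 * b / 2) := uIcc_subset_Icc hbK hu'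
  have hbound : ∀ t ∈ uIcc b u, |deriv F t| ≤ K := fun t ht => hK t (hsub ht)
  have hlip : |F u - F b| ≤ K * |u - b| :=
    (convex_uIcc b u).norm_image_sub_le_of_norm_deriv_le
      (fun t ht => (hasDerivAt_of_contDiffOn_Ioi hF (hIcc (hsub ht))).differentiableAt)
      hbound left_mem_uIcc right_mem_uIcc
  calc |boundaryEnergy F b u|
      ≤ |energyPotential F b u| + |u - b| * |F u - F b| := by
        rw [boundaryEnergy, ← abs_mul]; exact abs_sub _ _
    _ ≤ K * (u - b) ^ 2 + |u - b| * (K * |u - b|) := by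
        gcongr
        exact abs_energyPotential_le hbound
    _ = 2 * K * (u - b) ^ 2 := by rw [mul_left_comm, abs_mul_abs_self]; ring

end EnergyPotential

/-- The reduced stationary system on `x > 0`, with `F`, `G` as in the header, `a = n₊u₊` and end
state `ub = u₊`. -/
structure IsStationarySolution (μ a ub : ℝ) (F G u v : ℝ → ℝ) : Prop where
  contDiff_left : ContDiff ℝ 2 u
  contDiff_right : ContDiff ℝ 2 v
  pos : ∀ x ≥ (0:ℝ), 0 < u x ∧ 0 < v x
  tendsto_left : Tendsto u atTop (𝓝 ub)
  tendsto_right : Tendsto v atTop (𝓝 ub)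
  tendsto_deriv_left : Tendsto (deriv u) atTop (𝓝 0)
  tendsto_deriv_right : Tendsto (deriv v) atTop (𝓝 0)
  eq_left : ∀ x > (0:ℝ),
    deriv (F ∘ u) x = deriv (fun y => μ * deriv u y) x + a / v x * (v x - u x)
  eq_right : ∀ x > (0:ℝ),
    deriv (G ∘ v) x = deriv (fun y => a * deriv v y / v y) x - a / v x * (v x - u x)

namespace IsStationarySolution

variable {μ a ub : ℝ} {F G u v : ℝ → ℝ}

theorem hasDerivAt_left (h : IsStationarySolution μ a ub F G u v) (x : ℝ) :
    HasDerivAt u (deriv u x) x :=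
  (h.contDiff_left.differentiable (by norm_num) x).hasDerivAt

theorem hasDerivAt_right (h : IsStationarySolution μ a ub F G u v) (x : ℝ) :
    HasDerivAt v (deriv v x) x :=
  (h.contDiff_right.differentiable (by norm_num) x).hasDerivAt

theorem continuous_deriv_left (h : IsStationarySolution μ a ub F G u v) : Continuous (deriv u) :=
  h.contDiff_left.continuous_deriv (by norm_num)

theorem continuous_deriv_right (h : IsStationarySolution μ a ub F G u v) :
    Continuous (deriv v) :=
  h.contDiff_right.continuous_deriv (by norm_num)

theorem hasDerivAt_viscous_flux_left (h : IsStationarySolution μ a ub F G u v)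
    (hF : ContDiffOn ℝ 1 F (Ioi 0)) {x : ℝ} (hx : 0 < x) :
    HasDerivAt (fun y => μ * deriv u y) (deriv F (u x) * deriv u x - a / v x * (v x - u x)) x := by
  have hflux : HasDerivAt (fun y => μ * deriv u y) (μ * deriv (deriv u) x) x :=
    ((h.contDiff_left.deriv' (n := 1)).differentiable one_ne_zero x).hasDerivAt.const_mul μ
  have hchain : HasDerivAt (F ∘ u) (deriv F (u x) * deriv u x) x :=
    (hasDerivAt_of_contDiffOn_Ioi hF (h.pos x hx.le).1).comp x (h.hasDerivAt_left x)
  have heq := h.eq_left x hx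
  rw [hchain.deriv, hflux.deriv] at heq
  rwa [heq, add_sub_cancel_right]

theorem hasDerivAt_viscous_flux_right (h : IsStationarySolution μ a ub F G u v)
    (hG : ContDiffOn ℝ 1 G (Ioi 0)) {x : ℝ} (hx : 0 < x) :
    HasDerivAt (fun y => a * deriv v y / v y)
      (deriv G (v x) * deriv v x + a / v x * (v x - u x)) x := by
  have hflux : DifferentiableAt ℝ (fun y => a * deriv v y / v y) x :=
    ((((h.contDiff_right.deriv' (n := 1)).differentiable one_ne_zero x).const_mul a).div
      (h.hasDerivAt_right x).differentiableAt (h.pos x hx.le).2.ne')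
  have hchain : HasDerivAt (G ∘ v) (deriv G (v x) * deriv v x) x :=
    (hasDerivAt_of_contDiffOn_Ioi hG (h.pos x hx.le).2).comp x (h.hasDerivAt_right x)
  have heq := h.eq_right x hx
  rw [hchain.deriv] at heq
  rw [heq, sub_add_cancel]
  exact hflux.hasDerivAt

theorem first_integral_zero (h : IsStationarySolution μ a ub F G u v) (hub : 0 < ub)
    (hF : ContDiffOn ℝ 1 F (Ioi 0)) (hG : ContDiffOn ℝ 1 G (Ioi 0)) :
    μ * deriv u 0 + a * deriv v 0 / v 0 = F (u 0) + G (v 0) - (F ub + G ub) := by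
  set I : ℝ → ℝ := fun x => F (u x) + G (v x) - (μ * deriv u x + a * deriv v x / v x)
  have hderiv : ∀ x ∈ Ioi (0:ℝ), HasDerivAt I 0 x := fun x hx => by
    have hpos := h.pos x hx.out.le
    have := (((hasDerivAt_of_contDiffOn_Ioi hF hpos.1).comp x (h.hasDerivAt_left x)).add
      ((hasDerivAt_of_contDiffOn_Ioi hG hpos.2).comp x (h.hasDerivAt_right x))).sub
      ((h.hasDerivAt_viscous_flux_left hF hx).add (h.hasDerivAt_viscous_flux_right hG hx))
    exact this.congr_deriv (by ring)
  have hcont : ContinuousWithinAt I (Ici 0) 0 := by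
    have hpos := h.pos 0 le_rfl
    exact ((((hasDerivAt_of_contDiffOn_Ioi hF hpos.1).continuousAt.comp
      (h.hasDerivAt_left 0).continuousAt).add
      ((hasDerivAt_of_contDiffOn_Ioi hG hpos.2).continuousAt.comp
        (h.hasDerivAt_right 0).continuousAt)).sub
      ((h.continuous_deriv_left.continuousAt.const_mul μ).add
        ((h.continuous_deriv_right.continuousAt.const_mul a).div
          (h.hasDerivAt_right 0).continuousAt hpos.2.ne'))).continuousWithinAt
  have hlim : Tendsto I atTop (𝓝 (F ub + G ub)) := by
    have := ((((hasDerivAt_of_contDiffOn_Ioi hF hub).continuousAt.tendsto.comp h.tendsto_left).add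
      ((hasDerivAt_of_contDiffOn_Ioi hG hub).continuousAt.tendsto.comp h.tendsto_right)).sub
      ((h.tendsto_deriv_left.const_mul μ).add
        ((h.tendsto_deriv_right.const_mul a).div h.tendsto_right hub.ne')))
    simpa using this
  have hI := integral_Ioi_of_hasDerivAt_of_tendsto hcont hderiv integrableOn_zero hlim
  simp only [integral_zero, I] at hI
  linarith

theorem integral_dissipation_eq (h : IsStationarySolution μ a ub F G u v) (hμ : 0 ≤ μ)
    (ha : 0 ≤ a) (hub : 0 < ub) (hF : ContDiffOn ℝ 1 F (Ioi 0)) (hG : ContDiffOn ℝ 1 G (Ioi 0)) :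
    ∫ x in Ioi 0, (μ * deriv u x ^ 2 + a * deriv v x ^ 2 / v x + a / v x * (v x - u x) ^ 2)
      = energyPotential F ub (u 0) + energyPotential G ub (v 0)
        - (μ * deriv u 0 * (u 0 - ub) + a * deriv v 0 / v 0 * (v 0 - ub)) := by
  set W : ℝ → ℝ := fun x => μ * deriv u x * (u x - ub) + a * deriv v x / v x * (v x - ub)
    - energyPotential F ub (u x) - energyPotential G ub (v x)
  have hderiv : ∀ x ∈ Ioi (0:ℝ), HasDerivAt W
      (μ * deriv u x ^ 2 + a * deriv v x ^ 2 / v x + a / v x * (v x - u x) ^ 2) x := fun x hx => by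
    have hpos := h.pos x hx.out.le
    have := ((((h.hasDerivAt_viscous_flux_left hF hx).mul ((h.hasDerivAt_left x).sub_const ub)).add
      ((h.hasDerivAt_viscous_flux_right hG hx).mul ((h.hasDerivAt_right x).sub_const ub))).sub
      ((hasDerivAt_energyPotential hF hub hpos.1).comp x (h.hasDerivAt_left x))).sub
      ((hasDerivAt_energyPotential hG hub hpos.2).comp x (h.hasDerivAt_right x))
    exact this.congr_deriv (by ring)
  have hnonneg : ∀ x ∈ Ioi (0:ℝ),
      0 ≤ μ * deriv u x ^ 2 + a * deriv v x ^ 2 / v x + a / v x * (v x - u x) ^ 2 := fun x hx => by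
    have := (h.pos x hx.out.le).2
    positivity
  have hcont : ContinuousWithinAt W (Ici 0) 0 := by
    have hpos := h.pos 0 le_rfl
    exact (((((h.continuous_deriv_left.continuousAt.const_mul μ).mul
      ((h.hasDerivAt_left 0).continuousAt.sub continuousAt_const)).add
      (((h.continuous_deriv_right.continuousAt.const_mul a).div
        (h.hasDerivAt_right 0).continuousAt hpos.2.ne').mul
        ((h.hasDerivAt_right 0).continuousAt.sub continuousAt_const))).sub
      ((hasDerivAt_energyPotential hF hub hpos.1).continuousAt.comp
        (h.hasDerivAt_left 0).continuousAt)).sub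
      ((hasDerivAt_energyPotential hG hub hpos.2).continuousAt.comp
        (h.hasDerivAt_right 0).continuousAt)).continuousWithinAt
  have hlim : Tendsto W atTop (𝓝 0) := by
    have := ((((h.tendsto_deriv_left.const_mul μ).mul (h.tendsto_left.sub_const ub)).add
      (((h.tendsto_deriv_right.const_mul a).div h.tendsto_right hub.ne').mul
        (h.tendsto_right.sub_const ub))).sub
      ((hasDerivAt_energyPotential hF hub hub).continuousAt.tendsto.comp h.tendsto_left)).sub
      ((hasDerivAt_energyPotential hG hub hub).continuousAt.tendsto.comp h.tendsto_right)
    simpa [energyPotential_self] using this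
  rw [integral_Ioi_of_hasDerivAt_of_nonneg hcont hderiv hnonneg hlim]
  ring

theorem integral_dissipation_eq_boundaryEnergy (h : IsStationarySolution μ a ub F G u v)
    (hμ : 0 ≤ μ) (ha : 0 ≤ a) (hub : 0 < ub) (hF : ContDiffOn ℝ 1 F (Ioi 0))
    (hG : ContDiffOn ℝ 1 G (Ioi 0)) (h0 : v 0 = u 0) :
    ∫ x in Ioi 0, (μ * deriv u x ^ 2 + a * deriv v x ^ 2 / v x + a / v x * (v x - u x) ^ 2)
      = boundaryEnergy F ub (u 0) + boundaryEnergy G ub (u 0) := by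
  have hfirst := h.first_integral_zero hub hF hG
  rw [h.integral_dissipation_eq hμ ha hub hF hG, boundaryEnergy, boundaryEnergy]
  rw [h0] at hfirst ⊢
  linear_combination (ub - u 0) * hfirst

end IsStationarySolution

theorem stmt2_general (ρp np up μ A1 A2 γ α : ℝ)
    (hnp : 0 < np) (hup : 0 < up)
    (hμ : 0 < μ) :
    ∃ δ₀ C : ℝ, 0 < δ₀ ∧ 0 < C ∧
      ∀ (um : ℝ) (ut vt : ℝ → ℝ),
        0 < um → 0 < |up - um| → |up - um| ≤ δ₀ →
        ContDiff ℝ 2 ut → ContDiff ℝ 2 vt →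
        (∀ x ≥ (0:ℝ), 0 < ut x ∧ 0 < vt x) →
        (∃ c1 c2 : ℝ, 0 < c1 ∧ ∀ x ≥ (0:ℝ), c1 ≤ ut x ∧ ut x ≤ c2 ∧ c1 ≤ vt x ∧ vt x ≤ c2) →
        ut 0 = um → vt 0 = um →
        Tendsto ut atTop (nhds up) → Tendsto vt atTop (nhds up) →
        Tendsto (deriv ut) atTop (nhds 0) → Tendsto (deriv vt) atTop (nhds 0) →
        (∀ x ≥ (0:ℝ), |ut x - up| ≤ δ₀ ∧ |vt x - up| ≤ δ₀) →
        (∀ x > (0:ℝ),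
          deriv (fun y => ρp * up * ut y + A1 * ρp ^ γ * up ^ γ * (ut y) ^ (-γ)) x
            = deriv (fun y => μ * deriv ut y) x + (np * up / vt x) * (vt x - ut x)) →
        (∀ x > (0:ℝ),
          deriv (fun y => np * up * vt y + A2 * np ^ α * up ^ α * (vt y) ^ (-α)) x
            = deriv (fun y => np * up * deriv vt y / vt y) x - (np * up / vt x) * (vt x - ut x)) →
        (∫ x in Set.Ioi (0:ℝ),
            (μ * (deriv ut x) ^ 2 + np * up * (deriv vt x) ^ 2 / vt x
              + (np * up / vt x) * (vt x - ut x) ^ 2))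
          ≤ C * |up - um| ^ 2 := by
  have hF := contDiffOn_add_mul_rpow (ρp * up) (A1 * ρp ^ γ * up ^ γ) (-γ)
  have hG := contDiffOn_add_mul_rpow (np * up) (A2 * np ^ α * up ^ α) (-α)
  obtain ⟨M, hM0, hM⟩ := exists_abs_boundaryEnergy_le hF hup
  obtain ⟨N, hN0, hN⟩ := exists_abs_boundaryEnergy_le hG hup
  refine ⟨up / 2, M + N + 1, half_pos hup, by positivity, ?_⟩
  intro um ut vt _ _ hδ hut hvt hpos _ hut0 hvt0 hutT hvtT hdutT hdvtT _ heq1 heq2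
  have hsol : IsStationarySolution μ (np * up) up
      (fun w => ρp * up * w + A1 * ρp ^ γ * up ^ γ * w ^ (-γ))
      (fun w => np * up * w + A2 * np ^ α * up ^ α * w ^ (-α)) ut vt :=
    ⟨hut, hvt, hpos, hutT, hvtT, hdutT, hdvtT, heq1, heq2⟩
  have hδ' : |um - up| ≤ up / 2 := by rwa [abs_sub_comm]
  rw [hsol.integral_dissipation_eq_boundaryEnergy hμ.le (by positivity) hup hF hG
    (hvt0.trans hut0.symm), hut0]
  calc _ ≤ M * (um - up) ^ 2 + N * (um - up) ^ 2 :=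
        add_le_add ((le_abs_self _).trans (hM um hδ')) ((le_abs_self _).trans (hN um hδ'))
    _ ≤ (M + N + 1) * |up - um| ^ 2 := by
        rw [← sq_abs (um - up), abs_sub_comm]
        nlinarith [sq_nonneg |up - um|]

/-- uniform energy estimate ∫ (μ ũ_x² + n₊u₊ ṽ_x²/ṽ + (n₊u₊/ṽ)(ṽ−ũ)²) ≤ Cδ²
for solutions of the reduced stationary system with small boundary strength δ. -/
theorem stmt2 (ρp np up μ A1 A2 γ α : ℝ)
    (hρp : 0 < ρp) (hnp : 0 < np) (hup : 0 < up)
    (hμ : 0 < μ) (hA1 : 0 < A1) (hA2 : 0 < A2) (hγ : 1 ≤ γ) (hα : 1 ≤ α) :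
    ∃ δ₀ C : ℝ, 0 < δ₀ ∧ 0 < C ∧
      ∀ (um : ℝ) (ut vt : ℝ → ℝ),
        0 < um → 0 < |up - um| → |up - um| ≤ δ₀ →
        ContDiff ℝ 2 ut → ContDiff ℝ 2 vt →
        (∀ x ≥ (0:ℝ), 0 < ut x ∧ 0 < vt x) →
        (∃ c1 c2 : ℝ, 0 < c1 ∧ ∀ x ≥ (0:ℝ), c1 ≤ ut x ∧ ut x ≤ c2 ∧ c1 ≤ vt x ∧ vt x ≤ c2) →
        ut 0 = um → vt 0 = um →
        Tendsto ut atTop (nhds up) → Tendsto vt atTop (nhds up) →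
        Tendsto (deriv ut) atTop (nhds 0) → Tendsto (deriv vt) atTop (nhds 0) →
        (∀ x ≥ (0:ℝ), |ut x - up| ≤ δ₀ ∧ |vt x - up| ≤ δ₀) →
        (∀ x > (0:ℝ),
          deriv (fun y => ρp * up * ut y + A1 * ρp ^ γ * up ^ γ * (ut y) ^ (-γ)) x
            = deriv (fun y => μ * deriv ut y) x + (np * up / vt x) * (vt x - ut x)) →
        (∀ x > (0:ℝ),
          deriv (fun y => np * up * vt y + A2 * np ^ α * up ^ α * (vt y) ^ (-α)) x
            = deriv (fun y => np * up * deriv vt y / vt y) x - (np * up / vt x) * (vt x - ut x)) →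
        (∫ x in Set.Ioi (0:ℝ),
            (μ * (deriv ut x) ^ 2 + np * up * (deriv vt x) ^ 2 / vt x
              + (np * up / vt x) * (vt x - ut x) ^ 2))
          ≤ C * |up - um| ^ 2 :=
  stmt2_general ρp np up μ A1 A2 γ α hnp hup hμ
end

section
/- Fix ρ₊, n₊, u₊, μ, A₁, A₂ > 0 and γ, α ≥ 1. There exist constants δ₀ > 0 and C > 0 (depending only on these parameters) such that: if 0 < δ = |u₊ − u₋| ≤ δ₀ with u₋ > 0, and ũ, ṽ : [0,∞) → ℝ are twice continuously differentiable, positive, bounded above and below by positive constants, with ũ(0) = ṽ(0) = u₋, ũ → u₊, ṽ → u₊, ũ_x → 0, ṽ_x → 0 at infinity, |ũ(x) − u₊| ≤ δ₀ and |ṽ(x) − u₊| ≤ δ₀ for all x, satisfying on (0,∞) the reduced stationary system (ρ₊u₊ũ + A₁ρ₊^γu₊^γ ũ^{−γ})_x = (μ ũ_x)_x + (n₊u₊/ṽ)(ṽ − ũ) and (n₊u₊ṽ + A₂n₊^αu₊^α ṽ^{−α})_x = (n₊u₊ ṽ_x/ṽ)_x − (n₊u₊/ṽ)(ṽ − ũ),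 then the boundary derivatives satisfy |ũ_x(0)| ≤ C|u₋ − u₊| and |ṽ_x(0)| ≤ C|u₋ − u₊|. -/
/-!
Adding the two equations shows that the total flux `μ ũ_x + n₊u₊ ṽ_x / ṽ - F(ũ) - G(ṽ)`, with
`F`, `G` the momentum fluxes of the two phases, is constant; comparing `x = 0` with `x = ∞`
expresses `μ ũ_x(0) + n₊u₊ ṽ_x(0) / u₋` as `F(u₋) + G(u₋) - F(u₊) - G(u₊) = O(δ)`. Testing the
equations against `ũ - u₊` and `ṽ - u₊` gives an energy that vanishes at infinity and whose
derivative is the dissipation `μ ũ_x² + n₊u₊ ṽ_x² / ṽ + (n₊u₊ / ṽ)(ṽ - ũ)² ≥ 0`, so the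
dissipation on `(0, 1)` is bounded by the boundary energy, which the flux identity shows to be
`O(δ²)`. The first equation bounds `ũ_xx²` by the dissipation, and the trace inequality
`g(0)² ≤ ∫₀¹ (2g² + g'²)` for `g = ũ_x` gives `|ũ_x(0)| = O(δ)`; the flux identity then
bounds `ṽ_x(0)`.
-/

open Filter Topology MeasureTheory Set

theorem abs_sub_le_mul_of_hasDerivAt {f f' : ℝ → ℝ} {M x y : ℝ}
    (hf : ∀ t ∈ uIcc x y, HasDerivAt f (f' t) t) (hM : ∀ t ∈ uIcc x y, |f' t| ≤ M) :
    |f y - f x| ≤ M * |y - x| :=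
  (convex_uIcc x y).norm_image_sub_le_of_norm_hasDerivWithin_le
    (fun t ht => (hf t ht).hasDerivWithinAt) hM left_mem_uIcc right_mem_uIcc

theorem integral_le_sub_of_hasDerivAt_of_tendsto {e D : ℝ → ℝ} {a b L : ℝ} (hab : a ≤ b)
    (he : ContinuousOn e (Ici a)) (hD : ∀ x ∈ Ioi a, HasDerivAt e (D x) x)
    (hD_nonneg : ∀ x ∈ Ioi a, 0 ≤ D x) (hD_int : IntervalIntegrable D volume a b)
    (he_lim : Tendsto e atTop (𝓝 L)) :
    ∫ x in a..b, D x ≤ L - e a := by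
  have hmono : MonotoneOn e (Ici a) := by
    refine monotoneOn_of_deriv_nonneg (convex_Ici a) he ?_ ?_ <;> rw [interior_Ici]
    · exact fun x hx => (hD x hx).differentiableAt.differentiableWithinAt
    · exact fun x hx => (hD x hx).deriv ▸ hD_nonneg x hx
  have heb : e b ≤ L := ge_of_tendsto he_lim <| (eventually_ge_atTop b).mono fun y hy =>
    hmono (mem_Ici.2 hab) (mem_Ici.2 (hab.trans hy)) hy
  rw [intervalIntegral.integral_eq_sub_of_hasDerivAt_of_le hab (he.mono Icc_subset_Ici_self)
    (fun x hx => hD x hx.1) hD_int]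
  linarith

theorem eq_of_hasDerivAt_zero_of_tendsto {H : ℝ → ℝ} {a L : ℝ} (hH : ContinuousOn H (Ici a))
    (hD : ∀ x ∈ Ioi a, HasDerivAt H 0 x) (hH_lim : Tendsto H atTop (𝓝 L)) : H a = L := by
  have h₁ := integral_le_sub_of_hasDerivAt_of_tendsto le_rfl hH hD (fun _ _ => le_rfl)
    intervalIntegrable_const hH_lim
  have h₂ := integral_le_sub_of_hasDerivAt_of_tendsto (e := -H) le_rfl hH.neg
    (fun x hx => by simpa using (hD x hx).neg) (fun _ _ => le_rfl) intervalIntegrable_const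
    hH_lim.neg
  simp only [intervalIntegral.integral_same, Pi.neg_apply] at h₁ h₂
  linarith

theorem sq_le_integral_two_mul_sq_add_deriv_sq {g : ℝ → ℝ} (hg : ContDiff ℝ 1 g) :
    g 0 ^ 2 ≤ ∫ x in (0:ℝ)..1, (2 * g x ^ 2 + deriv g x ^ 2) := by
  have hg' : Continuous (deriv g) := hg.continuous_deriv le_rfl
  have hd : ∀ x, HasDerivAt g (deriv g x) x := fun x =>
    (hg.differentiable one_ne_zero x).hasDerivAt
  -- `(1 - x) * g x ^ 2` falls from `g 0 ^ 2` to `0` on `[0, 1]`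
  have hftc : ∫ x in (0:ℝ)..1, (g x ^ 2 - 2 * (1 - x) * g x * deriv g x) = g 0 ^ 2 := by
    rw [intervalIntegral.integral_eq_sub_of_hasDerivAt (f := fun x => -((1 - x) * g x ^ 2))
      (fun x _ => ?_) (by apply Continuous.intervalIntegrable; fun_prop)]
    · simp
    · exact (((hasDerivAt_id x).const_sub 1).mul ((hd x).pow 2)).neg.congr_deriv (by simp; ring)
  rw [← hftc]
  refine intervalIntegral.integral_mono_on zero_le_one
    (by apply Continuous.intervalIntegrable; fun_prop)
    (by apply Continuous.intervalIntegrable; fun_prop) fun x hx => ?_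
  nlinarith [sq_nonneg (g x + (1 - x) * deriv g x),
    mul_nonneg (mul_nonneg hx.1 (by linarith [hx.2] : (0:ℝ) ≤ 2 - x)) (sq_nonneg (deriv g x))]

/-- Equal to `∫_c^s (t - c) F'(t) dt`, but defined without `F'`, so no continuity of `F'` is
needed. -/
noncomputable def relPotential (F : ℝ → ℝ) (c s : ℝ) : ℝ := (s - c) * F s - ∫ t in c..s, F t

@[simp]
theorem relPotential_self (F : ℝ → ℝ) (c : ℝ) : relPotential F c c = 0 := by
  simp [relPotential]

theorem hasDerivAt_relPotential {F F' : ℝ → ℝ} {c s : ℝ}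
    (hF : ∀ t > 0, HasDerivAt F (F' t) t) (hc : 0 < c) (hs : 0 < s) :
    HasDerivAt (relPotential F c) ((s - c) * F' s) s := by
  have hFc : ContinuousOn F (Ioi 0) := fun t ht => (hF t ht).continuousAt.continuousWithinAt
  have hint : HasDerivAt (fun s => ∫ t in c..s, F t) (F s) s :=
    intervalIntegral.integral_hasDerivAt_right
      ((hFc.mono fun t ht => (lt_min hc hs).trans_le ht.1).intervalIntegrable)
      (hFc.stronglyMeasurableAtFilter isOpen_Ioi s hs) (hF s hs).continuousAt
  exact ((((hasDerivAt_id s).sub_const c).mul (hF s hs)).sub hint).congr_deriv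
    (by simp only [id]; ring)

theorem abs_sub_le_of_forall_abs_deriv_le {F F' : ℝ → ℝ} {lo M c s : ℝ}
    (hF : ∀ t > 0, HasDerivAt F (F' t) t) (hlo : 0 < lo) (hM : ∀ t ≥ lo, |F' t| ≤ M)
    (hc : lo ≤ c) (hs : lo ≤ s) :
    |F s - F c| ≤ M * |s - c| :=
  abs_sub_le_mul_of_hasDerivAt
    (fun t ht => hF t (hlo.trans_le ((le_min hc hs).trans ht.1)))
    (fun t ht => hM t ((le_min hc hs).trans ht.1))

theorem abs_relPotential_le {F F' : ℝ → ℝ} {lo M c s : ℝ}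
    (hF : ∀ t > 0, HasDerivAt F (F' t) t) (hlo : 0 < lo) (hM : ∀ t ≥ lo, |F' t| ≤ M)
    (hc : lo ≤ c) (hs : lo ≤ s) :
    |relPotential F c s| ≤ M * |s - c| ^ 2 := by
  have hmem : ∀ t ∈ uIcc c s, lo ≤ t := fun t ht => (le_min hc hs).trans ht.1
  have h := abs_sub_le_mul_of_hasDerivAt (f := relPotential F c) (M := |s - c| * M)
    (fun t ht => hasDerivAt_relPotential hF (hlo.trans_le hc) (hlo.trans_le (hmem t ht)))
    (fun t ht => by
      rw [abs_mul]
      exact mul_le_mul (abs_sub_left_of_mem_uIcc ht) (hM t (hmem t ht)) (abs_nonneg _)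
        (abs_nonneg _))
  simpa [sq, mul_comm, mul_left_comm] using h

/-- The momentum flux `ρ̃ũ² + A ρ̃^γ` with `ρ̃ = ρ₊u₊/ũ`, written as `c ũ + k ũ ^ p`. -/
noncomputable def momentumFlux (c k p s : ℝ) : ℝ := c * s + k * s ^ p

noncomputable def momentumFluxDeriv (c k p s : ℝ) : ℝ := c + k * p * s ^ (p - 1)

theorem hasDerivAt_momentumFlux {c k p s : ℝ} (hs : 0 < s) :
    HasDerivAt (momentumFlux c k p) (momentumFluxDeriv c k p s) s :=
  (((hasDerivAt_id s).const_mul c).add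
    ((Real.hasDerivAt_rpow_const (Or.inl hs.ne')).const_mul k)).congr_deriv
    (by simp only [momentumFluxDeriv]; ring)

theorem deriv_momentumFlux_comp {c k p x : ℝ} {f : ℝ → ℝ} (hf : DifferentiableAt ℝ f x)
    (hx : 0 < f x) :
    deriv (fun y => c * f y + k * f y ^ p) x = momentumFluxDeriv c k p (f x) * deriv f x :=
  ((hasDerivAt_momentumFlux hx).comp x hf.hasDerivAt).deriv

theorem abs_momentumFluxDeriv_neg_le {c k q lo s : ℝ} (hc : 0 ≤ c) (hk : 0 ≤ k) (hq : 0 ≤ q)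
    (hlo : 0 < lo) (hs : lo ≤ s) :
    |momentumFluxDeriv c k (-q) s| ≤ c + k * q * lo ^ (-q - 1) := by
  have hkq : 0 ≤ k * q := mul_nonneg hk hq
  have hterm : 0 ≤ k * q * s ^ (-q - 1) :=
    mul_nonneg hkq (Real.rpow_nonneg (hlo.le.trans hs) _)
  have hterm_le : k * q * s ^ (-q - 1) ≤ k * q * lo ^ (-q - 1) :=
    mul_le_mul_of_nonneg_left (Real.rpow_le_rpow_of_nonpos hlo hs (by linarith)) hkq
  rw [abs_le, momentumFluxDeriv]
  constructor <;> linarith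

/-- The reduced stationary system on `(0, ∞)` with the momentum fluxes differentiated by the chain
rule: `F`, `G` are the fluxes of the two phases, `F'`, `G'` their derivatives, `b = n₊u₊`, and `c`
is the far-field state `u₊`. -/
structure IsReducedSolution (F F' G G' : ℝ → ℝ) (μ b c : ℝ) (u v : ℝ → ℝ) : Prop where
  hasDerivAt_F : ∀ s > 0, HasDerivAt F (F' s) s
  hasDerivAt_G : ∀ s > 0, HasDerivAt G (G' s) s
  pos_c : 0 < c
  contDiff_u : ContDiff ℝ 2 u
  contDiff_v : ContDiff ℝ 2 v
  pos : ∀ x ≥ 0, 0 < u x ∧ 0 < v x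
  tendsto_u : Tendsto u atTop (𝓝 c)
  tendsto_v : Tendsto v atTop (𝓝 c)
  tendsto_deriv_u : Tendsto (deriv u) atTop (𝓝 0)
  tendsto_deriv_v : Tendsto (deriv v) atTop (𝓝 0)
  ode_u : ∀ x > 0, F' (u x) * deriv u x = μ * deriv (deriv u) x + b / v x * (v x - u x)
  ode_v : ∀ x > 0, G' (v x) * deriv v x
    = deriv (fun y => b * deriv v y / v y) x - b / v x * (v x - u x)

noncomputable def totalFlux (F G : ℝ → ℝ) (μ b : ℝ) (u v : ℝ → ℝ) (x : ℝ) : ℝ :=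
  μ * deriv u x + b * deriv v x / v x - F (u x) - G (v x)

noncomputable def energy (F G : ℝ → ℝ) (μ b c : ℝ) (u v : ℝ → ℝ) (x : ℝ) : ℝ :=
  μ * deriv u x * (u x - c) + b * deriv v x / v x * (v x - c)
    - relPotential F c (u x) - relPotential G c (v x)

noncomputable def dissipation (μ b : ℝ) (u v : ℝ → ℝ) (x : ℝ) : ℝ :=
  μ * deriv u x ^ 2 + b * deriv v x ^ 2 / v x + b / v x * (v x - u x) ^ 2

namespace IsReducedSolution

variable {F F' G G' : ℝ → ℝ} {μ b c : ℝ} {u v : ℝ → ℝ}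

theorem hasDerivAt_u (h : IsReducedSolution F F' G G' μ b c u v) (x : ℝ) :
    HasDerivAt u (deriv u x) x :=
  (h.contDiff_u.differentiable two_ne_zero x).hasDerivAt

theorem hasDerivAt_v (h : IsReducedSolution F F' G G' μ b c u v) (x : ℝ) :
    HasDerivAt v (deriv v x) x :=
  (h.contDiff_v.differentiable two_ne_zero x).hasDerivAt

theorem hasDerivAt_deriv_u (h : IsReducedSolution F F' G G' μ b c u v) (x : ℝ) :
    HasDerivAt (deriv u) (deriv (deriv u) x) x :=
  ((h.contDiff_u.deriv' (n := 1)).differentiable one_ne_zero x).hasDerivAt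

theorem hasDerivAt_viscousFlux_v (h : IsReducedSolution F F' G G' μ b c u v) {x : ℝ} (hx : 0 ≤ x) :
    HasDerivAt (fun y => b * deriv v y / v y) (deriv (fun y => b * deriv v y / v y) x) x :=
  ((((h.contDiff_v.deriv' (n := 1)).differentiable one_ne_zero x).const_mul b).div
    (h.hasDerivAt_v x).differentiableAt (h.pos x hx).2.ne').hasDerivAt

theorem hasDerivAt_totalFlux (h : IsReducedSolution F F' G G' μ b c u v) {x : ℝ} (hx : 0 < x) :
    HasDerivAt (totalFlux F G μ b u v) 0 x :=
  ((((h.hasDerivAt_deriv_u x).const_mul μ).add (h.hasDerivAt_viscousFlux_v hx.le)).sub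
    ((h.hasDerivAt_F _ (h.pos x hx.le).1).comp x (h.hasDerivAt_u x)) |>.sub
    ((h.hasDerivAt_G _ (h.pos x hx.le).2).comp x (h.hasDerivAt_v x))).congr_deriv
    (by linear_combination -(h.ode_u x hx + h.ode_v x hx))

theorem continuousAt_totalFlux (h : IsReducedSolution F F' G G' μ b c u v) {x : ℝ} (hx : 0 ≤ x) :
    ContinuousAt (totalFlux F G μ b u v) x :=
  ((((h.hasDerivAt_deriv_u x).continuousAt.const_mul μ).add
    (h.hasDerivAt_viscousFlux_v hx).continuousAt).sub
    ((h.hasDerivAt_F _ (h.pos x hx).1).continuousAt.comp (h.hasDerivAt_u x).continuousAt)).sub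
    ((h.hasDerivAt_G _ (h.pos x hx).2).continuousAt.comp (h.hasDerivAt_v x).continuousAt)

theorem tendsto_totalFlux (h : IsReducedSolution F F' G G' μ b c u v) :
    Tendsto (totalFlux F G μ b u v) atTop (𝓝 (-F c - G c)) := by
  have hlim := (((h.tendsto_deriv_u.const_mul μ).add
    ((h.tendsto_deriv_v.const_mul b).div h.tendsto_v h.pos_c.ne')).sub
    ((h.hasDerivAt_F c h.pos_c).continuousAt.tendsto.comp h.tendsto_u)).sub
    ((h.hasDerivAt_G c h.pos_c).continuousAt.tendsto.comp h.tendsto_v)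
  rwa [mul_zero, mul_zero, zero_div, zero_add, zero_sub] at hlim

theorem totalFlux_zero (h : IsReducedSolution F F' G G' μ b c u v) :
    totalFlux F G μ b u v 0 = -F c - G c :=
  eq_of_hasDerivAt_zero_of_tendsto (fun _ hx => (h.continuousAt_totalFlux hx).continuousWithinAt)
    (fun _ hx => h.hasDerivAt_totalFlux hx) h.tendsto_totalFlux

theorem hasDerivAt_energy (h : IsReducedSolution F F' G G' μ b c u v) {x : ℝ} (hx : 0 < x) :
    HasDerivAt (energy F G μ b c u v) (dissipation μ b u v x) x :=
  ((((h.hasDerivAt_deriv_u x).const_mul μ).mul ((h.hasDerivAt_u x).sub_const c)).add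
    ((h.hasDerivAt_viscousFlux_v hx.le).mul ((h.hasDerivAt_v x).sub_const c)) |>.sub
    ((hasDerivAt_relPotential h.hasDerivAt_F h.pos_c (h.pos x hx.le).1).comp x
      (h.hasDerivAt_u x)) |>.sub
    ((hasDerivAt_relPotential h.hasDerivAt_G h.pos_c (h.pos x hx.le).2).comp x
      (h.hasDerivAt_v x))).congr_deriv
    (by
      simp only [dissipation]
      linear_combination -(u x - c) * h.ode_u x hx - (v x - c) * h.ode_v x hx)

theorem continuousAt_energy (h : IsReducedSolution F F' G G' μ b c u v) {x : ℝ} (hx : 0 ≤ x) :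
    ContinuousAt (energy F G μ b c u v) x :=
  (((((h.hasDerivAt_deriv_u x).continuousAt.const_mul μ).mul
    ((h.hasDerivAt_u x).continuousAt.sub continuousAt_const)).add
    ((h.hasDerivAt_viscousFlux_v hx).continuousAt.mul
      ((h.hasDerivAt_v x).continuousAt.sub continuousAt_const))).sub
    ((hasDerivAt_relPotential h.hasDerivAt_F h.pos_c (h.pos x hx).1).continuousAt.comp
      (h.hasDerivAt_u x).continuousAt)).sub
    ((hasDerivAt_relPotential h.hasDerivAt_G h.pos_c (h.pos x hx).2).continuousAt.comp
      (h.hasDerivAt_v x).continuousAt)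

theorem tendsto_energy (h : IsReducedSolution F F' G G' μ b c u v) :
    Tendsto (energy F G μ b c u v) atTop (𝓝 0) := by
  have hlim := ((((h.tendsto_deriv_u.const_mul μ).mul (h.tendsto_u.sub_const c)).add
    (((h.tendsto_deriv_v.const_mul b).div h.tendsto_v h.pos_c.ne').mul
      (h.tendsto_v.sub_const c))).sub
    ((hasDerivAt_relPotential h.hasDerivAt_F h.pos_c h.pos_c).continuousAt.tendsto.comp
      h.tendsto_u)).sub
    ((hasDerivAt_relPotential h.hasDerivAt_G h.pos_c h.pos_c).continuousAt.tendsto.comp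
      h.tendsto_v)
  simp only [relPotential_self, sub_self, mul_zero, zero_div, add_zero] at hlim
  exact hlim

theorem dissipation_nonneg (h : IsReducedSolution F F' G G' μ b c u v) (hμ : 0 ≤ μ) (hb : 0 ≤ b)
    {x : ℝ} (hx : 0 ≤ x) : 0 ≤ dissipation μ b u v x := by
  have hv := (h.pos x hx).2
  unfold dissipation
  have := div_nonneg (mul_nonneg hb (sq_nonneg (deriv v x))) hv.le
  have := mul_nonneg (div_nonneg hb hv.le) (sq_nonneg (v x - u x))
  have := mul_nonneg hμ (sq_nonneg (deriv u x))
  linarith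

theorem continuousAt_dissipation (h : IsReducedSolution F F' G G' μ b c u v) {x : ℝ}
    (hx : 0 ≤ x) : ContinuousAt (dissipation μ b u v) x := by
  have hv := (h.hasDerivAt_v x).continuousAt
  have hv' := (h.contDiff_v.continuous_deriv one_le_two).continuousAt (x := x)
  have hu := (h.hasDerivAt_u x).continuousAt
  have hne := (h.pos x hx).2.ne'
  exact (((h.hasDerivAt_deriv_u x).continuousAt.pow 2).const_mul μ).add
    (((hv'.pow 2).const_mul b).div hv hne) |>.add
    ((continuousAt_const.div hv hne).mul ((hv.sub hu).pow 2))

theorem intervalIntegrable_dissipation (h : IsReducedSolution F F' G G' μ b c u v) :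
    IntervalIntegrable (dissipation μ b u v) volume 0 1 :=
  ContinuousOn.intervalIntegrable fun x hx =>
    (h.continuousAt_dissipation (by simpa using hx.1 : (0:ℝ) ≤ x)).continuousWithinAt

theorem integral_dissipation_le (h : IsReducedSolution F F' G G' μ b c u v) (hμ : 0 ≤ μ)
    (hb : 0 ≤ b) : ∫ x in (0:ℝ)..1, dissipation μ b u v x ≤ -energy F G μ b c u v 0 := by
  simpa using integral_le_sub_of_hasDerivAt_of_tendsto zero_le_one
    (fun _ hx => (h.continuousAt_energy hx).continuousWithinAt)
    (fun _ hx => h.hasDerivAt_energy hx) (fun _ hx => h.dissipation_nonneg hμ hb (le_of_lt hx))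
    h.intervalIntegrable_dissipation h.tendsto_energy

theorem le_of_forall_le_u (h : IsReducedSolution F F' G G' μ b c u v) {lo : ℝ}
    (hu_lo : ∀ x ≥ 0, lo ≤ u x) : lo ≤ c :=
  ge_of_tendsto h.tendsto_u ((eventually_ge_atTop 0).mono hu_lo)

section Estimates

variable {lo M : ℝ}

theorem abs_energy_zero_le (h : IsReducedSolution F F' G G' μ b c u v) (hlo : 0 < lo)
    (hu_lo : ∀ x ≥ 0, lo ≤ u x) (hF' : ∀ s ≥ lo, |F' s| ≤ M) (hG' : ∀ s ≥ lo, |G' s| ≤ M)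
    (hv0 : v 0 = u 0) :
    |energy F G μ b c u v 0| ≤ 4 * M * |u 0 - c| ^ 2 := by
  have hc := h.le_of_forall_le_u hu_lo
  have hu0 := hu_lo 0 le_rfl
  have hF := abs_sub_le_of_forall_abs_deriv_le h.hasDerivAt_F hlo hF' hc hu0
  have hG := abs_sub_le_of_forall_abs_deriv_le h.hasDerivAt_G hlo hG' hc hu0
  have hΦ := abs_relPotential_le h.hasDerivAt_F hlo hF' hc hu0
  have hΨ := abs_relPotential_le h.hasDerivAt_G hlo hG' hc hu0
  have he : energy F G μ b c u v 0 = (u 0 - c) * (F (u 0) - F c + (G (u 0) - G c))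
      - relPotential F c (u 0) - relPotential G c (u 0) := by
    have := h.totalFlux_zero
    simp only [energy, totalFlux, hv0] at this ⊢
    linear_combination (u 0 - c) * this
  have hX : |(u 0 - c) * (F (u 0) - F c + (G (u 0) - G c))| ≤ |u 0 - c| * (2 * M * |u 0 - c|) := by
    rw [abs_mul]
    exact mul_le_mul_of_nonneg_left ((abs_add_le _ _).trans (by linarith)) (abs_nonneg _)
  rw [he, abs_le]
  constructor <;> nlinarith [abs_le.1 hX, abs_le.1 hΦ, abs_le.1 hΨ]

theorem two_mul_sq_deriv_add_sq_deriv_deriv_le (h : IsReducedSolution F F' G G' μ b c u v)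
    (hμ : 0 < μ) (hb : 0 < b) (hlo : 0 < lo) (hF' : ∀ s ≥ lo, |F' s| ≤ M) {x : ℝ} (hx : 0 < x)
    (hux : lo ≤ u x) (hvx : lo ≤ v x) :
    2 * deriv u x ^ 2 + deriv (deriv u) x ^ 2
      ≤ (2 / μ + 2 * (M ^ 2 / μ + b / lo) / μ ^ 2) * dissipation μ b u v x := by
  set q := b / v x
  set w := v x - u x
  set A := μ * deriv u x ^ 2 with hA_def
  set B := q * w ^ 2
  have hv : 0 < v x := hlo.trans_le hvx
  have hq : 0 ≤ q := div_nonneg hb.le hv.le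
  have hq_le : q ≤ b / lo := div_le_div_of_nonneg_left hb.le hlo hvx
  have hA : 0 ≤ A := by positivity
  have hB : 0 ≤ B := by positivity
  have hAB : A + B ≤ dissipation μ b u v x := by
    have : 0 ≤ b * deriv v x ^ 2 / v x := div_nonneg (by positivity) hv.le
    simp only [dissipation]
    linarith
  have hF'_sq : F' (u x) ^ 2 ≤ M ^ 2 := by
    simpa only [sq_abs] using pow_le_pow_left₀ (abs_nonneg _) (hF' _ hux) 2
  have hode : μ * deriv (deriv u) x = F' (u x) * deriv u x - q * w := by
    linarith [h.ode_u x hx]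
  have hsq : (μ * deriv (deriv u) x) ^ 2 ≤ 2 * (M ^ 2 / μ) * A + 2 * (b / lo) * B := by
    have hMA : M ^ 2 / μ * A = M ^ 2 * deriv u x ^ 2 := by rw [hA_def]; field_simp
    rw [hode]
    nlinarith [sq_nonneg (F' (u x) * deriv u x + q * w),
      mul_le_mul_of_nonneg_right hF'_sq (sq_nonneg (deriv u x)),
      mul_le_mul_of_nonneg_right hq_le hB]
  have hu'' : deriv (deriv u) x ^ 2 ≤ 2 * (M ^ 2 / μ + b / lo) / μ ^ 2 * (A + B) := by
    rw [div_mul_eq_mul_div, le_div_iff₀ (by positivity)]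
    nlinarith [mul_nonneg (by positivity : (0:ℝ) ≤ M ^ 2 / μ) hB,
      mul_nonneg (by positivity : (0:ℝ) ≤ b / lo) hA]
  have hu' : 2 * deriv u x ^ 2 ≤ 2 / μ * (A + B) := by
    have : 2 * deriv u x ^ 2 = 2 / μ * A := by rw [hA_def]; field_simp
    rw [this]
    exact mul_le_mul_of_nonneg_left (by linarith) (by positivity)
  calc 2 * deriv u x ^ 2 + deriv (deriv u) x ^ 2
      ≤ (2 / μ + 2 * (M ^ 2 / μ + b / lo) / μ ^ 2) * (A + B) := by linarith
    _ ≤ _ := mul_le_mul_of_nonneg_left hAB (by positivity)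

theorem abs_deriv_u_zero_le (h : IsReducedSolution F F' G G' μ b c u v) (hμ : 0 < μ) (hb : 0 < b)
    (hlo : 0 < lo) (hu_lo : ∀ x ≥ 0, lo ≤ u x) (hv_lo : ∀ x ≥ 0, lo ≤ v x)
    (hF' : ∀ s ≥ lo, |F' s| ≤ M) (hG' : ∀ s ≥ lo, |G' s| ≤ M) (hv0 : v 0 = u 0) :
    |deriv u 0| ≤ √(4 * M * (2 / μ + 2 * (M ^ 2 / μ + b / lo) / μ ^ 2)) * |u 0 - c| := by
  set K := 2 / μ + 2 * (M ^ 2 / μ + b / lo) / μ ^ 2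
  have hK : 0 ≤ K := by positivity
  have hE : ∫ x in (0:ℝ)..1, dissipation μ b u v x ≤ 4 * M * |u 0 - c| ^ 2 :=
    (h.integral_dissipation_le hμ.le hb.le).trans
      ((neg_le_abs _).trans (h.abs_energy_zero_le hlo hu_lo hF' hG' hv0))
  have hu' : ContDiff ℝ 1 (deriv u) := h.contDiff_u.deriv' (n := 1)
  have hsq : deriv u 0 ^ 2 ≤ K * (4 * M * |u 0 - c| ^ 2) :=
    calc deriv u 0 ^ 2
        ≤ ∫ x in (0:ℝ)..1, (2 * deriv u x ^ 2 + deriv (deriv u) x ^ 2) :=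
          sq_le_integral_two_mul_sq_add_deriv_sq hu'
      _ ≤ ∫ x in (0:ℝ)..1, K * dissipation μ b u v x :=
          intervalIntegral.integral_mono_on_of_le_Ioo zero_le_one
            (by
              apply Continuous.intervalIntegrable
              have := hu'.continuous
              have := hu'.continuous_deriv le_rfl
              fun_prop)
            (h.intervalIntegrable_dissipation.const_mul K) fun x hx =>
            h.two_mul_sq_deriv_add_sq_deriv_deriv_le hμ hb hlo hF' hx.1
              (hu_lo x hx.1.le) (hv_lo x hx.1.le)
      _ = K * ∫ x in (0:ℝ)..1, dissipation μ b u v x := intervalIntegral.integral_const_mul _ _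
      _ ≤ K * (4 * M * |u 0 - c| ^ 2) := mul_le_mul_of_nonneg_left hE hK
  calc |deriv u 0| ≤ √(K * (4 * M * |u 0 - c| ^ 2)) := Real.abs_le_sqrt hsq
    _ = √(4 * M * K) * |u 0 - c| := by
      rw [show K * (4 * M * |u 0 - c| ^ 2) = 4 * M * K * |u 0 - c| ^ 2 by ring,
        Real.sqrt_mul' _ (sq_nonneg _), Real.sqrt_sq (abs_nonneg _)]

theorem abs_deriv_v_zero_le (h : IsReducedSolution F F' G G' μ b c u v) (hμ : 0 ≤ μ) (hb : 0 < b)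
    (hlo : 0 < lo) (hu_lo : ∀ x ≥ 0, lo ≤ u x) (hF' : ∀ s ≥ lo, |F' s| ≤ M)
    (hG' : ∀ s ≥ lo, |G' s| ≤ M) (hv0 : v 0 = u 0) :
    |deriv v 0| ≤ u 0 / b * (2 * M * |u 0 - c| + μ * |deriv u 0|) := by
  have hc := h.le_of_forall_le_u hu_lo
  have hu0 := hu_lo 0 le_rfl
  have hF := abs_sub_le_of_forall_abs_deriv_le h.hasDerivAt_F hlo hF' hc hu0
  have hG := abs_sub_le_of_forall_abs_deriv_le h.hasDerivAt_G hlo hG' hc hu0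
  have hv'0 : deriv v 0 = u 0 / b * (F (u 0) - F c + (G (u 0) - G c) - μ * deriv u 0) := by
    have := h.totalFlux_zero
    simp only [totalFlux, hv0] at this
    field_simp [(hlo.trans_le hu0).ne'] at this ⊢
    linear_combination this
  rw [hv'0, abs_mul, abs_of_nonneg (div_nonneg (hlo.trans_le hu0).le hb.le)]
  refine mul_le_mul_of_nonneg_left ?_ (div_nonneg (hlo.trans_le hu0).le hb.le)
  calc |F (u 0) - F c + (G (u 0) - G c) - μ * deriv u 0|
      ≤ |F (u 0) - F c| + |G (u 0) - G c| + |μ * deriv u 0| :=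
        (abs_sub _ _).trans (add_le_add (abs_add_le _ _) le_rfl)
    _ ≤ 2 * M * |u 0 - c| + μ * |deriv u 0| := by
        rw [abs_mul, abs_of_nonneg hμ]
        linarith

theorem abs_deriv_zero_le (h : IsReducedSolution F F' G G' μ b c u v) (hμ : 0 < μ) (hb : 0 < b)
    (hlo : 0 < lo) (hu_lo : ∀ x ≥ 0, lo ≤ u x) (hv_lo : ∀ x ≥ 0, lo ≤ v x) {hi : ℝ}
    (hu0 : u 0 ≤ hi) (hF' : ∀ s ≥ lo, |F' s| ≤ M) (hG' : ∀ s ≥ lo, |G' s| ≤ M)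
    (hv0 : v 0 = u 0) :
    let Cu := √(4 * M * (2 / μ + 2 * (M ^ 2 / μ + b / lo) / μ ^ 2))
    |deriv u 0| ≤ (Cu + hi / b * (2 * M + μ * Cu)) * |u 0 - c| ∧
      |deriv v 0| ≤ (Cu + hi / b * (2 * M + μ * Cu)) * |u 0 - c| := by
  intro Cu
  have hM : 0 ≤ M := (abs_nonneg _).trans (hF' _ (hu_lo 0 le_rfl))
  have hu' : |deriv u 0| ≤ Cu * |u 0 - c| := h.abs_deriv_u_zero_le hμ hb hlo hu_lo hv_lo hF' hG' hv0
  have hv' := h.abs_deriv_v_zero_le hμ.le hb hlo hu_lo hF' hG' hv0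
  have hu0_nonneg : 0 ≤ u 0 := hlo.le.trans (hu_lo 0 le_rfl)
  have hhi : 0 ≤ hi / b * (2 * M + μ * Cu) := by
    have := hu0_nonneg.trans hu0
    positivity
  refine ⟨hu'.trans (by gcongr; exact le_add_of_nonneg_right hhi), ?_⟩
  calc |deriv v 0| ≤ u 0 / b * (2 * M * |u 0 - c| + μ * (Cu * |u 0 - c|)) := by
        refine hv'.trans ?_
        gcongr
    _ = u 0 / b * (2 * M + μ * Cu) * |u 0 - c| := by ring
    _ ≤ hi / b * (2 * M + μ * Cu) * |u 0 - c| := by gcongr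
    _ ≤ (Cu + hi / b * (2 * M + μ * Cu)) * |u 0 - c| := by
        gcongr
        exact le_add_of_nonneg_left (Real.sqrt_nonneg _)

end Estimates

end IsReducedSolution

/-- Lemma 2.1: boundary derivative bounds |ũ_x(0)| ≤ C|u₋−u₊|, |ṽ_x(0)| ≤ C|u₋−u₊|
for solutions of the reduced stationary system with small boundary strength δ. -/
theorem stmt3 (ρp np up μ A1 A2 γ α : ℝ)
    (hρp : 0 < ρp) (hnp : 0 < np) (hup : 0 < up)
    (hμ : 0 < μ) (hA1 : 0 < A1) (hA2 : 0 < A2) (hγ : 1 ≤ γ) (hα : 1 ≤ α) :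
    ∃ δ₀ C : ℝ, 0 < δ₀ ∧ 0 < C ∧
      ∀ (um : ℝ) (ut vt : ℝ → ℝ),
        0 < um → 0 < |up - um| → |up - um| ≤ δ₀ →
        ContDiff ℝ 2 ut → ContDiff ℝ 2 vt →
        (∀ x ≥ (0:ℝ), 0 < ut x ∧ 0 < vt x) →
        (∃ c1 c2 : ℝ, 0 < c1 ∧ ∀ x ≥ (0:ℝ), c1 ≤ ut x ∧ ut x ≤ c2 ∧ c1 ≤ vt x ∧ vt x ≤ c2) →
        ut 0 = um → vt 0 = um →
        Tendsto ut atTop (nhds up) → Tendsto vt atTop (nhds up) →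
        Tendsto (deriv ut) atTop (nhds 0) → Tendsto (deriv vt) atTop (nhds 0) →
        (∀ x ≥ (0:ℝ), |ut x - up| ≤ δ₀ ∧ |vt x - up| ≤ δ₀) →
        (∀ x > (0:ℝ),
          deriv (fun y => ρp * up * ut y + A1 * ρp ^ γ * up ^ γ * (ut y) ^ (-γ)) x
            = deriv (fun y => μ * deriv ut y) x + (np * up / vt x) * (vt x - ut x)) →
        (∀ x > (0:ℝ),
          deriv (fun y => np * up * vt y + A2 * np ^ α * up ^ α * (vt y) ^ (-α)) x
            = deriv (fun y => np * up * deriv vt y / vt y) x - (np * up / vt x) * (vt x - ut x)) →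
        |deriv ut 0| ≤ C * |um - up| ∧ |deriv vt 0| ≤ C * |um - up| := by
  set K1 := A1 * ρp ^ γ * up ^ γ
  set K2 := A2 * np ^ α * up ^ α
  set M := ρp * up + K1 * γ * (up / 2) ^ (-γ - 1) + (np * up + K2 * α * (up / 2) ^ (-α - 1))
  set Cu := √(4 * M * (2 / μ + 2 * (M ^ 2 / μ + np * up / (up / 2)) / μ ^ 2))
  have hF' : ∀ s ≥ up / 2, |momentumFluxDeriv (ρp * up) K1 (-γ) s| ≤ M := fun s hs =>
    (abs_momentumFluxDeriv_neg_le (by positivity) (by positivity) (by linarith) (by positivity)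
      hs).trans (le_add_of_nonneg_right (by positivity))
  have hG' : ∀ s ≥ up / 2, |momentumFluxDeriv (np * up) K2 (-α) s| ≤ M := fun s hs =>
    (abs_momentumFluxDeriv_neg_le (by positivity) (by positivity) (by linarith) (by positivity)
      hs).trans (le_add_of_nonneg_left (by positivity))
  refine ⟨up / 2, Cu + 3 * up / 2 / (np * up) * (2 * M + μ * Cu), by positivity, by positivity, ?_⟩
  intro um ut vt _ _ _ hut hvt hpos _ hu0 hv0 hu hv hu' hv' hnear heq1 heq2
  have hsol : IsReducedSolution
      (momentumFlux (ρp * up) K1 (-γ)) (momentumFluxDeriv (ρp * up) K1 (-γ))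
      (momentumFlux (np * up) K2 (-α)) (momentumFluxDeriv (np * up) K2 (-α)) μ (np * up) up ut vt :=
    ⟨fun _ => hasDerivAt_momentumFlux, fun _ => hasDerivAt_momentumFlux, hup, hut, hvt, hpos,
      hu, hv, hu', hv', fun x hx => ?_, fun x hx => ?_⟩
  · have hlo : ∀ x ≥ 0, up / 2 ≤ ut x ∧ up / 2 ≤ vt x := fun x hx => by
      obtain ⟨hux, hvx⟩ := hnear x hx
      exact ⟨by linarith [abs_le.1 hux], by linarith [abs_le.1 hvx]⟩
    have hum : ut 0 ≤ 3 * up / 2 := by linarith [abs_le.1 (hnear 0 le_rfl).1]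
    simpa only [hu0] using hsol.abs_deriv_zero_le hμ (by positivity) (by positivity)
      (fun x hx => (hlo x hx).1) (fun x hx => (hlo x hx).2) hum hF' hG' (hv0.trans hu0.symm)
  · rw [← deriv_momentumFlux_comp (hut.differentiable two_ne_zero x) (hpos x hx.le).1,
      heq1 x hx, deriv_const_mul _ ((hut.deriv' (n := 1)).differentiable one_ne_zero x)]
  · rw [← deriv_momentumFlux_comp (hvt.differentiable two_ne_zero x) (hpos x hx.le).2, heq2 x hx]
end

section
/- Let λ₁, λ₂, λ₃ ∈ ℂ be the roots (with multiplicity) of a monic cubic polynomial with real coefficients. If λ₁λ₂λ₃ is real and negative, λ₁ + λ₂ + λ₃ is real and positive, and λ₁λ₂ + λ₁λ₃ + λ₂λ₃ is real and negative, then the roots can be reordered so that Re λ₁ > 0, Re λ₂ > 0, and λ₃ is a real number with λ₃ < 0. -/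
open Complex

lemma pairPos (z w : ℂ) (h1 : (z+w).im = 0) (h2 : (z*w).im = 0)
    (hs : 0 < (z+w).re) (hp : 0 < (z*w).re) : 0 < z.re ∧ 0 < w.re := by
  simp only [Complex.add_im, Complex.add_re, Complex.mul_im, Complex.mul_re] at *
  have hd : w.im = -z.im := by linarith
  rw [hd] at h2 hp
  have h2' : z.im * (w.re - z.re) = 0 := by ring_nf; linarith [h2]
  rcases mul_eq_zero.1 h2' with h | h
  · constructor <;> nlinarith
  · constructor <;> nlinarith

lemma pairNeg (z w : ℂ) (h1 : (z+w).im = 0) (h2 : (z*w).im = 0)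
    (hp : (z*w).re < 0) : z.im = 0 ∧ w.im = 0 := by
  simp only [Complex.add_im, Complex.mul_im, Complex.mul_re] at *
  have hd : w.im = -z.im := by linarith
  rw [hd] at h2 hp
  have h2' : z.im * (w.re - z.re) = 0 := by ring_nf; linarith [h2]
  rcases mul_eq_zero.1 h2' with h | h
  · exact ⟨h, by rw [hd, h, neg_zero]⟩
  · have hw : w.re = z.re := by linarith
    rw [hw] at hp
    exfalso; nlinarith [sq_nonneg z.re, sq_nonneg z.im]



/-- For the roots (with multiplicity) of a monic real cubic — equivalently,
complex numbers whose elementary symmetric functions are real — with e₃ < 0, e₁ > 0 and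
e₂ < 0, the roots can be reordered so that two have positive real part and one is a
negative real number. -/
theorem stmt4 (l1 l2 l3 : ℂ)
    (hprod_re : (l1 * l2 * l3).im = 0) (hprod : (l1 * l2 * l3).re < 0)
    (hsum_re : (l1 + l2 + l3).im = 0) (hsum : 0 < (l1 + l2 + l3).re)
    (hsym_re : (l1 * l2 + l1 * l3 + l2 * l3).im = 0)
    (hsym : (l1 * l2 + l1 * l3 + l2 * l3).re < 0) :
    ∃ m1 m2 m3 : ℂ, ({m1, m2, m3} : Multiset ℂ) = ({l1, l2, l3} : Multiset ℂ) ∧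
      0 < m1.re ∧ 0 < m2.re ∧ m3.im = 0 ∧ m3.re < 0 := by
  set c := starRingEnd ℂ
  have hS : c (l1+l2+l3) = l1+l2+l3 := Complex.conj_eq_iff_im.2 hsum_re
  have hQ : c (l1*l2 + l1*l3 + l2*l3) = l1*l2 + l1*l3 + l2*l3 :=
    Complex.conj_eq_iff_im.2 hsym_re
  have hP : c (l1*l2*l3) = l1*l2*l3 := Complex.conj_eq_iff_im.2 hprod_re
  have key : (c l1 - l1) * (c l1 - l2) * (c l1 - l3) = 0 := by
    have expand : (c l1 - l1) * (c l1 - l2) * (c l1 - l3)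
        = (c l1)^3 - (l1+l2+l3) * (c l1)^2 + (l1*l2 + l1*l3 + l2*l3) * (c l1)
          - l1*l2*l3 := by ring
    rw [expand, ← hS, ← hQ, ← hP]
    have : (c l1)^3 - c (l1+l2+l3) * (c l1)^2 + c (l1*l2 + l1*l3 + l2*l3) * (c l1)
        - c (l1*l2*l3)
        = c (l1^3 - (l1+l2+l3) * l1^2 + (l1*l2 + l1*l3 + l2*l3) * l1 - l1*l2*l3) := by
      simp only [map_sub, map_add, map_mul, map_pow]
    rw [this, show l1^3 - (l1+l2+l3) * l1^2 + (l1*l2 + l1*l3 + l2*l3) * l1 - l1*l2*l3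
        = 0 from by ring, map_zero]
  rcases mul_eq_zero.1 key with h12 | h3
  rcases mul_eq_zero.1 h12 with h1 | h2
  · -- c l1 = l1 : l1 real
    have h1im : l1.im = 0 := Complex.conj_eq_iff_im.1 (by rwa [sub_eq_zero] at h1)
    have hpr : (l1 * (l2 * l3)).im = 0 := by rw [← mul_assoc]; exact hprod_re
    have hpr' : (l1 * (l2 * l3)).re < 0 := by rw [← mul_assoc]; exact hprod
    rw [Complex.mul_im, h1im] at hpr
    rw [Complex.mul_re, h1im] at hpr'
    simp only [zero_mul, add_zero, sub_zero] at hpr hpr'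
    -- hpr : l1.re * (l2*l3).im = 0, hpr' : l1.re * (l2*l3).re < 0
    have h1ne : l1.re ≠ 0 := by intro h; rw [h, zero_mul] at hpr'; exact lt_irrefl 0 hpr'
    have h23im : (l2 * l3).im = 0 := by
      rcases mul_eq_zero.1 hpr with h | h; exact absurd h h1ne; exact h
    have hsum23 : (l2 + l3).im = 0 := by
      have := hsum_re; simp only [Complex.add_im] at this ⊢; linarith [h1im, this]
    rcases lt_or_gt_of_ne h1ne with hneg | hpos
    · -- l1 real negative; l2, l3 the pair
      have hp23 : 0 < (l2 * l3).re := by nlinarith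
      have hs23 : 0 < (l2 + l3).re := by
        have := hsum; simp only [Complex.add_re] at this ⊢; linarith
      obtain ⟨hz, hw⟩ := pairPos l2 l3 hsum23 h23im hs23 hp23
      exact ⟨l2, l3, l1, by
        show l2 ::ₘ l3 ::ₘ l1 ::ₘ 0 = l1 ::ₘ l2 ::ₘ l3 ::ₘ 0
        rw [Multiset.cons_swap l3 l1, Multiset.cons_swap l2 l1], hz, hw, h1im, hneg⟩
    · -- l1 real positive; l2*l3 real negative ⇒ l2 l3 real of opposite signs
      have hp23 : (l2 * l3).re < 0 := by nlinarith
      obtain ⟨h2im, h3im⟩ := pairNeg l2 l3 hsum23 h23im hp23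
      rw [Complex.mul_re, h2im, h3im] at hp23
      simp only [mul_zero, sub_zero] at hp23
      rcases mul_neg_iff.1 hp23 with ⟨hb, hc⟩ | ⟨hb, hc⟩
      · exact ⟨l1, l2, l3, rfl, hpos, hb, h3im, hc⟩
      · exact ⟨l1, l3, l2, by
          show l1 ::ₘ l3 ::ₘ l2 ::ₘ 0 = l1 ::ₘ l2 ::ₘ l3 ::ₘ 0
          rw [Multiset.cons_swap l3 l2], hpos, hc, h2im, hb⟩
  · -- c l1 = l2 : l1, l2 conjugate pair, l3 real
    have hl2 : l2 = c l1 := ((sub_eq_zero.1 h2).symm)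
    have h2im : l2.im = -l1.im := by rw [hl2]; exact Complex.conj_im l1
    have h3im : l3.im = 0 := by
      have := hsum_re; simp only [Complex.add_im] at this; linarith [h2im, this]
    have hmul : l1 * l2 = ((Complex.normSq l1 : ℝ) : ℂ) := by rw [hl2, Complex.mul_conj]
    have hprod' : Complex.normSq l1 * l3.re < 0 := by
      have := hprod
      rw [hmul, Complex.mul_re, Complex.ofReal_re, Complex.ofReal_im] at this
      simpa using this
    have hns : 0 < Complex.normSq l1 := by
      rcases (Complex.normSq_nonneg l1).lt_or_eq with h | h
      · exact h
      · exfalso; rw [← h, zero_mul] at hprod'; exact lt_irrefl 0 hprod'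
    have h3neg : l3.re < 0 := by nlinarith
    have hs12 : 0 < (l1 + l2).re := by
      have := hsum; simp only [Complex.add_re] at this ⊢; linarith
    have hi12 : (l1 + l2).im = 0 := by simp [Complex.add_im, h2im]
    have hm12i : (l1 * l2).im = 0 := by rw [hmul]; simp
    have hm12r : 0 < (l1 * l2).re := by rw [hmul]; simpa using hns
    obtain ⟨hz, hw⟩ := pairPos l1 l2 hi12 hm12i hs12 hm12r
    exact ⟨l1, l2, l3, rfl, hz, hw, h3im, h3neg⟩
  · -- c l1 = l3 : l1, l3 conjugate pair, l2 real
    have hl3 : l3 = c l1 := ((sub_eq_zero.1 h3).symm)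
    have h3im : l3.im = -l1.im := by rw [hl3]; exact Complex.conj_im l1
    have h2im : l2.im = 0 := by
      have := hsum_re; simp only [Complex.add_im] at this; linarith [h3im, this]
    have hmul : l1 * l3 = ((Complex.normSq l1 : ℝ) : ℂ) := by rw [hl3, Complex.mul_conj]
    have hprod' : Complex.normSq l1 * l2.re < 0 := by
      have := hprod
      rw [show l1 * l2 * l3 = (l1 * l3) * l2 from by ring, hmul, Complex.mul_re,
        Complex.ofReal_re, Complex.ofReal_im] at this
      simpa using this
    have hns : 0 < Complex.normSq l1 := by
      rcases (Complex.normSq_nonneg l1).lt_or_eq with h | h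
      · exact h
      · exfalso; rw [← h, zero_mul] at hprod'; exact lt_irrefl 0 hprod'
    have h2neg : l2.re < 0 := by nlinarith
    have hs13 : 0 < (l1 + l3).re := by
      have := hsum; simp only [Complex.add_re] at this ⊢; linarith
    have hi13 : (l1 + l3).im = 0 := by simp [Complex.add_im, h3im]
    have hm13i : (l1 * l3).im = 0 := by rw [hmul]; simp
    have hm13r : 0 < (l1 * l3).re := by rw [hmul]; simpa using hns
    obtain ⟨hz, hw⟩ := pairPos l1 l3 hi13 hm13i hs13 hm13r
    exact ⟨l1, l3, l2, by
      show l1 ::ₘ l3 ::ₘ l2 ::ₘ 0 = l1 ::ₘ l2 ::ₘ l3 ::ₘ 0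
      rw [Multiset.cons_swap l3 l2], hz, hw, h2im, h2neg⟩
end

section
/- Let ρ₊, n₊, u₊, μ, A₁, A₂ > 0 and γ, α ≥ 1, and let J₊ be the 3×3 real matrix with rows (0, 1, 0), (n₊/μ, (ρ₊u₊² − A₁γρ₊^γ)/(μu₊), −n₊/μ), and ((ρ₊u₊² − A₁γρ₊^γ)/(n₊u₊), −μ/n₊, (n₊u₊² − A₂αn₊^α)/(n₊u₊)). Define the Mach number M₊ = u₊/c₊ with c₊ = ((A₁γρ₊^γ + A₂αn₊^α)/(ρ₊ + n₊))^{1/2}. If M₊ > 1, then the eigenvalues λ₁, λ₂, λ₃ ∈ ℂ of J₊ (the roots of its characteristic polynomial, with multiplicity) can be ordered so that Re λ₁ > 0, Re λ₂ > 0, and λ₃ is real with λ₃ < 0. -/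
open Polynomial

/-- The Jacobian matrix J₊ at the far-field state of the stationary full two-phase flow
ODE system. -/
noncomputable def Jplus (ρp np up μ A1 A2 γ α : ℝ) : Matrix (Fin 3) (Fin 3) ℝ :=
  !![0, 1, 0;
     np / μ, (ρp * up ^ 2 - A1 * γ * ρp ^ γ) / (μ * up), -(np / μ);
     (ρp * up ^ 2 - A1 * γ * ρp ^ γ) / (np * up), -(μ / np),
       (np * up ^ 2 - A2 * α * np ^ α) / (np * up)]

/-- Key algebraic lemma: the cubic `X³ − (d+g)X² + (dg−1−b)X + (d+bg)` with `b > 0` and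
positive constant term `d + bg > 0` factors over `ℂ` into one negative real root and two
roots with positive real part. -/
lemma cubic_key (b d g : ℝ) (hb : 0 < b) (hc0 : 0 < d + b * g) :
    ∃ l1 l2 l3 : ℂ,
      ((X : ℂ[X]) ^ 3 - C ((d : ℂ) + (g : ℂ)) * X ^ 2
          + C ((d : ℂ) * (g : ℂ) - 1 - (b : ℂ)) * X + C ((d : ℂ) + (b : ℂ) * (g : ℂ)))
        = (X - C l1) * (X - C l2) * (X - C l3) ∧
      0 < l1.re ∧ 0 < l2.re ∧ l3.im = 0 ∧ l3.re < 0 := by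
  set c0 : ℝ := d + b * g with hc0def
  -- the real cubic
  set f : ℝ → ℝ := fun x => x ^ 3 - (d + g) * x ^ 2 + (d * g - 1 - b) * x + c0 with hf
  have hf0 : f 0 = c0 := by simp [hf]
  -- a negative real root exists
  set Mb : ℝ := 1 + |d + g| + |d * g - 1 - b| + |c0| with hMb
  have hMb1 : 1 ≤ Mb := by
    have h5 : (0:ℝ) ≤ |d + g| := abs_nonneg _
    have h6 : (0:ℝ) ≤ |d * g - 1 - b| := abs_nonneg _
    have h7 : (0:ℝ) ≤ |c0| := abs_nonneg _
    simp only [hMb]; linarith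
  have hfM : f (-Mb) < 0 := by
    have h1 : -(d + g) ≤ |d + g| := neg_le_abs _
    have h2 : d + g ≤ |d + g| := le_abs_self _
    have h3 : -(d * g - 1 - b) ≤ |d * g - 1 - b| := neg_le_abs _
    have h4 : c0 ≤ |c0| := le_abs_self _
    have h5 : (0:ℝ) ≤ |d + g| := abs_nonneg _
    have h6 : (0:ℝ) ≤ |d * g - 1 - b| := abs_nonneg _
    have h7 : (0:ℝ) ≤ |c0| := abs_nonneg _
    have : f (-Mb) = -Mb ^ 3 - (d + g) * Mb ^ 2 - (d * g - 1 - b) * Mb + c0 := by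
      show (-Mb) ^ 3 - (d + g) * (-Mb) ^ 2 + (d * g - 1 - b) * (-Mb) + c0 = _
      ring
    rw [this]
    nlinarith [sq_nonneg Mb, sq_nonneg (Mb - 1)]
  have hcont : ContinuousOn f (Set.Icc (-Mb) 0) := by
    apply Continuous.continuousOn; fun_prop
  have hmem : (0:ℝ) ∈ Set.Icc (f (-Mb)) (f 0) := by
    refine ⟨by linarith, by rw [hf0]; linarith⟩
  obtain ⟨l, hlmem, hlroot⟩ := intermediate_value_Icc (by linarith : -Mb ≤ (0:ℝ)) hcont hmem
  have hlneg : l < 0 := by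
    rcases lt_or_eq_of_le hlmem.2 with h | h
    · exact h
    · exfalso; rw [h] at hlroot; rw [hf0] at hlroot; linarith
  -- the root is below d + g
  have hllt : l < d + g := by
    by_contra hcon
    push_neg at hcon
    -- set t = -l, x = d - l, y = g - l
    have ht : 0 < -l := by linarith
    have h1 : 0 < (d - l) + b * (g - l) := by nlinarith
    have h2 : (g - l) + b * (d - l) < 0 := by nlinarith
    have h3 : (d - l) * (g - l) ≤ 0 := by
      rcases lt_trichotomy (d - l) 0 with hx | hx | hx
      · rcases le_or_gt (g - l) 0 with hy | hy
        · exfalso; nlinarith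
        · nlinarith
      · simp [hx]
      · rcases le_or_gt (g - l) 0 with hy | hy
        · nlinarith
        · exfalso; nlinarith
    have hval : f l = (-l) * (-((d - l) * (g - l))) + (1 + b) * (-l) + c0 := by
      show l ^ 3 - (d + g) * l ^ 2 + (d * g - 1 - b) * l + c0 = _
      ring
    have hpos : 0 < f l := by
      have t1 : 0 ≤ (-l) * (-((d - l) * (g - l))) := by
        apply mul_nonneg (le_of_lt ht); linarith
      have t2 : 0 < (1 + b) * (-l) := by positivity
      rw [hval]; linarith
    rw [hlroot] at hpos; linarith
  -- quadratic factor data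
  set β : ℝ := l - (d + g) with hβ
  set γq : ℝ := (d * g - 1 - b) - (d + g) * l + l ^ 2 with hγq
  have hβneg : β < 0 := by rw [hβ]; linarith
  have hlγ : l * γq = -c0 := by
    have h : l ^ 3 - (d + g) * l ^ 2 + (d * g - 1 - b) * l + c0 = 0 := hlroot
    rw [hγq]
    linear_combination h
  have hγpos : 0 < γq := by nlinarith
  -- relations needed for the factorization, over ℂ
  have key : ∀ l1 l2 : ℂ, l1 + l2 = ((-β : ℝ) : ℂ) → l1 * l2 = ((γq : ℝ) : ℂ) →
      0 < l1.re → 0 < l2.re →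
      ∃ l1' l2' l3' : ℂ,
        ((X : ℂ[X]) ^ 3 - C ((d : ℂ) + (g : ℂ)) * X ^ 2
            + C ((d : ℂ) * (g : ℂ) - 1 - (b : ℂ)) * X + C ((d : ℂ) + (b : ℂ) * (g : ℂ)))
          = (X - C l1') * (X - C l2') * (X - C l3') ∧
        0 < l1'.re ∧ 0 < l2'.re ∧ l3'.im = 0 ∧ l3'.re < 0 := by
    intro l1 l2 hsum hprod hre1 hre2
    refine ⟨l1, l2, ((l : ℝ) : ℂ), ?_, hre1, hre2, by simp, by simpa using hlneg⟩
    have e1 : l1 + l2 + ((l:ℝ):ℂ) = (d : ℂ) + (g : ℂ) := by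
      rw [hsum]; push_cast [hβ]; ring
    have e2 : l1 * l2 + (l1 + l2) * ((l:ℝ):ℂ) = (d : ℂ) * (g : ℂ) - 1 - (b : ℂ) := by
      rw [hsum, hprod]; push_cast [hβ, hγq]; ring
    have e3 : l1 * l2 * ((l:ℝ):ℂ) = -((d : ℂ) + (b : ℂ) * (g : ℂ)) := by
      rw [hprod]
      have : ((γq : ℝ) : ℂ) * ((l:ℝ):ℂ) = ((-c0 : ℝ) : ℂ) := by
        rw [← Complex.ofReal_mul]; rw [mul_comm] at hlγ; rw [hlγ]
      rw [this]; push_cast [hc0def]; ring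
    have expand : (X - C l1) * (X - C l2) * (X - C ((l:ℝ):ℂ))
        = X ^ 3 - C (l1 + l2 + ((l:ℝ):ℂ)) * X ^ 2
          + C (l1 * l2 + (l1 + l2) * ((l:ℝ):ℂ)) * X - C (l1 * l2 * ((l:ℝ):ℂ)) := by
      simp only [map_add, map_mul]
      ring
    rw [expand, e1, e2, e3, map_neg, sub_neg_eq_add]
  -- split on discriminant of quadratic X² + βX + γq
  rcases le_or_gt 0 (β ^ 2 - 4 * γq) with hΔ | hΔ
  · -- two positive real roots
    set r : ℝ := Real.sqrt (β ^ 2 - 4 * γq) with hr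
    have hr0 : 0 ≤ r := Real.sqrt_nonneg _
    have hr2 : r ^ 2 = β ^ 2 - 4 * γq := Real.sq_sqrt hΔ
    have hrlt : r < -β := by nlinarith
    have h1pos : 0 < (-β + r) / 2 := by linarith
    have h2pos : 0 < (-β - r) / 2 := by linarith
    refine key (((-β + r) / 2 : ℝ) : ℂ) (((-β - r) / 2 : ℝ) : ℂ) ?_ ?_
      (by simpa using h1pos) (by simpa using h2pos)
    · push_cast; ring
    · rw [← Complex.ofReal_mul, Complex.ofReal_inj]
      linear_combination (-(1:ℝ)/4) * hr2
  · -- complex conjugate pair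
    set r : ℝ := Real.sqrt (4 * γq - β ^ 2) with hr
    have hr2 : r ^ 2 = 4 * γq - β ^ 2 := Real.sq_sqrt (by linarith)
    have hβ2 : 0 < -β / 2 := by linarith
    refine key (((-β / 2 : ℝ) : ℂ) + ((r / 2 : ℝ) : ℂ) * Complex.I)
      (((-β / 2 : ℝ) : ℂ) - ((r / 2 : ℝ) : ℂ) * Complex.I) ?_ ?_
      (by simpa using hβ2) (by simpa using hβ2)
    · push_cast; ring
    · have hr2' : ((r : ℝ) : ℂ) ^ 2 = ((4 * γq - β ^ 2 : ℝ) : ℂ) := by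
        rw [← Complex.ofReal_pow, hr2]
      push_cast at hr2' ⊢
      linear_combination (-((r:ℂ)/2)^2) * Complex.I_sq + (1/4 : ℂ) * hr2'

set_option maxHeartbeats 1600000 in
/-- in the supersonic case M₊ > 1 the eigenvalues of J₊ can be ordered so
that two have positive real part and one is a negative real number. -/
theorem stmt5 (ρp np up μ A1 A2 γ α : ℝ)
    (hρp : 0 < ρp) (hnp : 0 < np) (hup : 0 < up) (hμ : 0 < μ)
    (hA1 : 0 < A1) (hA2 : 0 < A2) (hγ : 1 ≤ γ) (hα : 1 ≤ α)
    (hM : 1 < up / Real.sqrt ((A1 * γ * ρp ^ γ + A2 * α * np ^ α) / (ρp + np))) :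
    ∃ l1 l2 l3 : ℂ,
      ((Jplus ρp np up μ A1 A2 γ α).map (Complex.ofReal)).charpoly
        = (X - C l1) * (X - C l2) * (X - C l3) ∧
      0 < l1.re ∧ 0 < l2.re ∧ l3.im = 0 ∧ l3.re < 0 := by
  set s1 : ℝ := A1 * γ * ρp ^ γ with hs1
  set s2 : ℝ := A2 * α * np ^ α with hs2
  have hs1p : 0 < s1 := by
    have := Real.rpow_pos_of_pos hρp γ
    positivity
  have hs2p : 0 < s2 := by
    have := Real.rpow_pos_of_pos hnp α
    positivity
  -- supersonic condition
  have hq : 0 < (s1 + s2) / (ρp + np) := by positivity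
  have hsq : Real.sqrt ((s1 + s2) / (ρp + np)) < up := by
    have h := Real.sqrt_pos.mpr hq
    rw [lt_div_iff₀ h] at hM; linarith
  have hsup : s1 + s2 < (ρp + np) * up ^ 2 := by
    have h1 : (s1 + s2) / (ρp + np) < up ^ 2 := by
      have h := Real.sqrt_nonneg ((s1 + s2) / (ρp + np))
      calc (s1 + s2) / (ρp + np) = Real.sqrt ((s1 + s2) / (ρp + np)) ^ 2 :=
            (Real.sq_sqrt hq.le).symm
        _ < up ^ 2 := by nlinarith
    rw [div_lt_iff₀ (by positivity)] at h1; linarith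
  -- the three structural parameters
  set b : ℝ := np / μ with hbdef
  set d : ℝ := (ρp * up ^ 2 - s1) / (μ * up) with hddef
  set g : ℝ := (np * up ^ 2 - s2) / (np * up) with hgdef
  have hb : 0 < b := by positivity
  have hc0 : 0 < d + b * g := by
    have heq : d + b * g = ((ρp + np) * up ^ 2 - (s1 + s2)) / (μ * up) := by
      rw [hddef, hbdef, hgdef]; field_simp; ring
    rw [heq]
    apply div_pos (by linarith) (by positivity)
  obtain ⟨l1, l2, l3, hfac, h1, h2, h3, h4⟩ := cubic_key b d g hb hc0
  refine ⟨l1, l2, l3, ?_, h1, h2, h3, h4⟩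
  rw [← hfac]
  -- now compute the characteristic polynomial
  rw [Matrix.charpoly, Matrix.det_fin_three]
  simp [Matrix.charmatrix_apply_eq, Matrix.charmatrix_apply_ne, Jplus]
  have hμ' : (μ:ℂ) ≠ 0 := Complex.ofReal_ne_zero.mpr hμ.ne'
  have hup' : (up:ℂ) ≠ 0 := Complex.ofReal_ne_zero.mpr hup.ne'
  have hnp' : (np:ℂ) ≠ 0 := Complex.ofReal_ne_zero.mpr hnp.ne'
  have hd : ((ρp:ℂ) * (up:ℂ) ^ 2 - (A1:ℂ) * (γ:ℂ) * ((ρp ^ γ : ℝ):ℂ)) / ((μ:ℂ) * (up:ℂ))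
      = ((d:ℝ):ℂ) := by
    rw [hddef, hs1]; push_cast; ring
  have hg : ((np:ℂ) * (up:ℂ) ^ 2 - (A2:ℂ) * (α:ℂ) * ((np ^ α : ℝ):ℂ)) / ((np:ℂ) * (up:ℂ))
      = ((g:ℝ):ℂ) := by
    rw [hgdef, hs2]; push_cast; ring
  have sb : ((np:ℂ) / (μ:ℂ)) = ((b:ℝ):ℂ) := by rw [hbdef]; push_cast; ring
  have m1s : ((b:ℝ):ℂ) * ((μ:ℂ) / (np:ℂ)) = 1 := by
    rw [hbdef]; push_cast; field_simp
  have m2s : ((b:ℝ):ℂ) *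
      (((ρp:ℂ) * (up:ℂ) ^ 2 - (A1:ℂ) * (γ:ℂ) * ((ρp ^ γ : ℝ):ℂ)) / ((np:ℂ) * (up:ℂ)))
      = ((d:ℝ):ℂ) := by
    rw [hbdef, hddef, hs1]; push_cast; field_simp
  rw [hd, hg, sb]
  have m1 : C ((b:ℝ):ℂ) * C ((μ:ℂ) / (np:ℂ)) = 1 := by
    rw [← map_mul, m1s, map_one]
  have m2 : C ((b:ℝ):ℂ) *
      C ((((ρp:ℂ) * (up:ℂ) ^ 2 - (A1:ℂ) * (γ:ℂ) * ((ρp ^ γ : ℝ):ℂ)) / ((np:ℂ) * (up:ℂ))))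
      = C ((d:ℝ):ℂ) := by
    rw [← map_mul, m2s]
  linear_combination (-(X : ℂ[X])) * m1 + m2
end

section
/- Let ρ₊, n₊, u₊, μ, A₁, A₂ > 0 and γ, α ≥ 1, and let J₊ be the 3×3 real matrix with rows (0, 1, 0), (n₊/μ, (ρ₊u₊² − A₁γρ₊^γ)/(μu₊), −n₊/μ), and ((ρ₊u₊² − A₁γρ₊^γ)/(n₊u₊), −μ/n₊, (n₊u₊² − A₂αn₊^α)/(n₊u₊)). Define the Mach number M₊ = u₊/c₊ with c₊ = ((A₁γρ₊^γ + A₂αn₊^α)/(ρ₊ + n₊))^{1/2}. If M₊ < 1, then the eigenvalues λ₁, λ₂, λ₃ ∈ ℂ of J₊ (the roots of its characteristic polynomial, with multiplicity) can be ordered so that Re λ₁ < 0, Re λ₂ < 0, and λ₃ is real with λ₃ > 0. -/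
open Polynomial


private lemma cubic_pos_aux (s t r x : ℝ) (hx : 1 + |s| + |t| + |r| ≤ x) :
    0 < x^3 - s*x^2 + t*x + r := by
  have h1 : (1:ℝ) ≤ x := by
    have := abs_nonneg s; have := abs_nonneg t; have := abs_nonneg r; linarith
  have hx0 : (0:ℝ) < x := by linarith
  have hxx : x ≤ x^2 := by nlinarith
  have hA : s*x^2 ≤ abs s * x^2 := mul_le_mul_of_nonneg_right (le_abs_self s) (sq_nonneg x)
  have hB : -(abs t * x^2) ≤ t*x := by
    have h3 : abs t * x ≤ abs t * x^2 := mul_le_mul_of_nonneg_left hxx (abs_nonneg t)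
    nlinarith [neg_abs_le t, abs_nonneg t]
  have hC : -(abs r * x^2) ≤ r := by
    have h4 : (1:ℝ) ≤ x^2 := by nlinarith
    nlinarith [neg_abs_le r, abs_nonneg r]
  have key : (abs s + abs t + abs r) * x^2 ≤ (x-1) * x^2 := by
    apply mul_le_mul_of_nonneg_right _ (sq_nonneg x); linarith
  nlinarith [sq_nonneg x]

private lemma quad_neg_re_aux (b c : ℝ) (hb : 0 < b) (hc : 0 < c) :
    ∃ l1 l2 : ℂ, (X^2 + C (b:ℂ)*X + C (c:ℂ) : ℂ[X]) = (X - C l1)*(X - C l2)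
      ∧ l1.re < 0 ∧ l2.re < 0 := by
  set p : ℂ[X] := X^2 + C (b:ℂ)*X + C (c:ℂ) with hp
  have hpq : p = C 1*X^2 + C (b:ℂ)*X + C (c:ℂ) := by simp [hp]
  have hdeg : p.degree = 2 := by rw [hpq]; exact degree_quadratic one_ne_zero
  obtain ⟨l1, hl1⟩ := Complex.isAlgClosed.exists_root p (by rw [hdeg]; decide)
  have hl1' : l1^2 + (b:ℂ)*l1 + (c:ℂ) = 0 := by
    have := hl1; simp [hp, IsRoot, eval_add, eval_mul, eval_pow] at this; linear_combination this
  refine ⟨l1, -(b:ℂ) - l1, ?_, ?_, ?_⟩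
  · have hsum : l1 + (-(b:ℂ) - l1) = -(b:ℂ) := by ring
    have hprod : l1 * (-(b:ℂ) - l1) = (c:ℂ) := by linear_combination -hl1'
    have e : (X - C l1)*(X - C (-(b:ℂ) - l1)) = X^2 - (C l1 + C (-(b:ℂ) - l1))*X
        + C l1 * C (-(b:ℂ) - l1) := by ring
    rw [hp, e, ← map_add, ← map_mul, hsum, hprod, map_neg]; ring
  all_goals {
    have hprod : l1 * (-(b:ℂ) - l1) = (c:ℂ) := by linear_combination -hl1'
    have him : (l1 * (-(b:ℂ) - l1)).im = 0 := by rw [hprod]; simp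
    have hre : (l1 * (-(b:ℂ) - l1)).re = c := by rw [hprod]; simp
    simp only [Complex.mul_im, Complex.mul_re, Complex.sub_re, Complex.sub_im,
      Complex.neg_re, Complex.neg_im, Complex.ofReal_re, Complex.ofReal_im] at him hre
    by_cases h : l1.im = 0
    · simp [h] at him hre ⊢
      nlinarith [hre, hb, hc]
    · have h2 : l1.im * (-b - l1.re - l1.re) = 0 := by nlinarith [him]
      have h3 : -b - l1.re - l1.re = 0 := by
        rcases mul_eq_zero.mp h2 with h' | h'
        · exact absurd h' h
        · exact h'
      first
      | linarith
      | (simp only [Complex.sub_re, Complex.neg_re, Complex.ofReal_re]; linarith) }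

private lemma cubic_two_neg_one_pos (s t r : ℝ) (hrneg : r < 0) (hst : 0 ≤ t → s < 0) :
    ∃ l1 l2 l3 : ℂ,
      ((X^3 - C s*X^2 + C t*X + C r : ℝ[X]).map (algebraMap ℝ ℂ))
        = (X - C l1) * (X - C l2) * (X - C l3) ∧
      l1.re < 0 ∧ l2.re < 0 ∧ l3.im = 0 ∧ 0 < l3.re := by
  set f : ℝ[X] := X^3 - C s*X^2 + C t*X + C r with hfdef
  have heval : ∀ x : ℝ, f.eval x = x^3 - s*x^2 + t*x + r := by
    intro x
    simp only [hfdef, eval_add, eval_sub, eval_mul, eval_pow, eval_X, eval_C]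
  have hfB : ∀ x, 1 + |s| + |t| + |r| ≤ x → 0 < f.eval x := fun x hx => by
    rw [heval]; exact cubic_pos_aux s t r x hx
  set B : ℝ := 1 + |s| + |t| + |r| with hBdef
  have hB1 : (1:ℝ) ≤ B := by
    have := abs_nonneg s; have := abs_nonneg t; have := abs_nonneg r
    rw [hBdef]; linarith
  have hfB0 : 0 < f.eval B := hfB B le_rfl
  have hf0 : f.eval 0 < 0 := by rw [heval]; norm_num; exact hrneg
  have hfne : f ≠ 0 := by
    intro h; rw [h] at hfB0; simp at hfB0
  have hcont : Continuous fun x : ℝ => f.eval x := f.continuous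
  obtain ⟨x0, hx0mem, hx0⟩ :=
    intermediate_value_Ioo (by linarith : (0:ℝ) ≤ B) hcont.continuousOn ⟨hf0, hfB0⟩
  have hx0r : x0 ∈ f.roots.toFinset :=
    Multiset.mem_toFinset.mpr (Polynomial.mem_roots'.mpr ⟨hfne, hx0⟩)
  have hSne : f.roots.toFinset.Nonempty := ⟨x0, hx0r⟩
  set l3 : ℝ := f.roots.toFinset.max' hSne with hl3def
  have hl3root : f.eval l3 = 0 :=
    (Polynomial.mem_roots'.mp (Multiset.mem_toFinset.mp (f.roots.toFinset.max'_mem hSne))).2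
  have hl3max : ∀ y, f.eval y = 0 → y ≤ l3 := fun y hy =>
    f.roots.toFinset.le_max' y (Multiset.mem_toFinset.mpr (Polynomial.mem_roots'.mpr ⟨hfne, hy⟩))
  have hl3pos : 0 < l3 := lt_of_lt_of_le hx0mem.1 (hl3max x0 hx0)
  have hsl3 : s < l3 := by
    rcases le_or_gt 0 t with htt | htt
    · exact lt_trans (hst htt) hl3pos
    · rcases le_or_gt s 0 with hs0 | hs0
      · exact lt_of_le_of_lt hs0 hl3pos
      · have hfs : f.eval s < 0 := by
          rw [heval]; nlinarith [mul_neg_of_neg_of_pos htt hs0]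
        by_contra hcon
        push_neg at hcon
        have hne : l3 ≠ s := by
          intro h; rw [h] at hl3root; exact absurd hl3root (ne_of_lt hfs)
        have hl3s : l3 < s := lt_of_le_of_ne hcon hne
        set B' : ℝ := max (s+1) B with hB'def
        have hfB' : 0 < f.eval B' := hfB B' (le_max_right _ _)
        have hsB' : s < B' := lt_of_lt_of_le (by linarith) (le_max_left _ _)
        obtain ⟨y, hymem, hy⟩ :=
          intermediate_value_Ioo (le_of_lt hsB') hcont.continuousOn ⟨hfs, hfB'⟩
        have hyl3 : y ≤ l3 := hl3max y hy
        have := hymem.1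
        linarith
  -- quadratic factor
  set bq : ℝ := l3 - s with hbqdef
  set cq : ℝ := t + l3*bq with hcqdef
  have hbq : 0 < bq := by rw [hbqdef]; linarith
  have hl3eq : l3^3 - s*l3^2 + t*l3 + r = 0 := by rw [← heval l3]; exact hl3root
  have hlcq : l3 * cq = -r := by rw [hcqdef, hbqdef]; linear_combination hl3eq
  have hcq : 0 < cq := by
    by_contra h
    push_neg at h
    nlinarith [mul_nonpos_of_nonneg_of_nonpos (le_of_lt hl3pos) h]
  have hfact : f = (X - C l3) * (X^2 + C bq*X + C cq) := by
    have e1 : (C s : ℝ[X]) = C l3 - C bq := by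
      rw [← map_sub]; congr 1; rw [hbqdef]; ring
    have e2 : (C t : ℝ[X]) = C cq - C l3 * C bq := by
      rw [← map_mul, ← map_sub]; congr 1; rw [hcqdef]; ring
    have e3 : (C r : ℝ[X]) = -(C l3 * C cq) := by
      rw [← map_mul, ← map_neg]; congr 1; linarith [hlcq]
    rw [hfdef, e1, e2, e3]; ring
  obtain ⟨l1, l2, hquad, h1re, h2re⟩ := quad_neg_re_aux bq cq hbq hcq
  refine ⟨l1, l2, (l3:ℂ), ?_, h1re, h2re, by simp, by simpa using hl3pos⟩
  rw [hfact]
  simp only [Polynomial.map_mul, Polynomial.map_sub, Polynomial.map_add, Polynomial.map_pow,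
    Polynomial.map_X, Polynomial.map_C, Complex.coe_algebraMap]
  rw [hquad]; ring
private lemma Jplus_charpoly (ρp np up μ A1 A2 γ α : ℝ) :
    (Jplus ρp np up μ A1 A2 γ α).charpoly
      = X^3 - C ((ρp * up ^ 2 - A1 * γ * ρp ^ γ)/(μ*up) + (np * up ^ 2 - A2 * α * np ^ α)/(np*up))*X^2
        + C (((ρp * up ^ 2 - A1 * γ * ρp ^ γ)/(μ*up))*((np * up ^ 2 - A2 * α * np ^ α)/(np*up))
            - (np/μ)*(μ/np) - np/μ)*X
        + C ((np/μ)*((np * up ^ 2 - A2 * α * np ^ α)/(np*up))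
            + (np/μ)*((ρp * up ^ 2 - A1 * γ * ρp ^ γ)/(np*up))) := by
  rw [Matrix.charpoly, Matrix.det_fin_three]
  simp [Jplus, map_add, map_sub, map_mul, map_neg]
  ring

/-- in the subsonic case M₊ < 1 the eigenvalues of J₊ can be ordered so
that two have negative real part and one is a positive real number. -/
theorem stmt6 (ρp np up μ A1 A2 γ α : ℝ)
    (hρp : 0 < ρp) (hnp : 0 < np) (hup : 0 < up) (hμ : 0 < μ)
    (hA1 : 0 < A1) (hA2 : 0 < A2) (hγ : 1 ≤ γ) (hα : 1 ≤ α)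
    (hM : up / Real.sqrt ((A1 * γ * ρp ^ γ + A2 * α * np ^ α) / (ρp + np)) < 1) :
    ∃ l1 l2 l3 : ℂ,
      ((Jplus ρp np up μ A1 A2 γ α).map (Complex.ofReal)).charpoly
        = (X - C l1) * (X - C l2) * (X - C l3) ∧
      l1.re < 0 ∧ l2.re < 0 ∧ l3.im = 0 ∧ 0 < l3.re := by
  have hγ0 : (0:ℝ) < γ := lt_of_lt_of_le one_pos hγ
  have hα0 : (0:ℝ) < α := lt_of_lt_of_le one_pos hα
  have hργ : 0 < ρp^γ := Real.rpow_pos_of_pos hρp γ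
  have hnα : 0 < np^α := Real.rpow_pos_of_pos hnp α
  have hK : 0 < A1 * γ * ρp ^ γ + A2 * α * np ^ α :=
    add_pos (mul_pos (mul_pos hA1 hγ0) hργ) (mul_pos (mul_pos hA2 hα0) hnα)
  have hρn : 0 < ρp + np := by linarith
  have hsqrt : 0 < Real.sqrt ((A1 * γ * ρp ^ γ + A2 * α * np ^ α) / (ρp + np)) :=
    Real.sqrt_pos.mpr (div_pos hK hρn)
  have h1 : up < Real.sqrt ((A1 * γ * ρp ^ γ + A2 * α * np ^ α) / (ρp + np)) := by
    rwa [div_lt_one hsqrt] at hM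
  have h2 : up^2 < (A1 * γ * ρp ^ γ + A2 * α * np ^ α) / (ρp + np) :=
    (Real.lt_sqrt (le_of_lt hup)).mp h1
  have hPQ : (ρp * up ^ 2 - A1 * γ * ρp ^ γ) + (np * up ^ 2 - A2 * α * np ^ α) < 0 := by
    have h3 : up^2 * (ρp + np) < A1 * γ * ρp ^ γ + A2 * α * np ^ α := (lt_div_iff₀ hρn).mp h2
    nlinarith [h3]
  set P : ℝ := ρp * up ^ 2 - A1 * γ * ρp ^ γ with hPdef
  set Q : ℝ := np * up ^ 2 - A2 * α * np ^ α with hQdef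
  have hμu : 0 < μ * up := mul_pos hμ hup
  have hnu : 0 < np * up := mul_pos hnp hup
  have hrneg : (np/μ)*(Q/(np*up)) + (np/μ)*(P/(np*up)) < 0 := by
    have heq : (np/μ)*(Q/(np*up)) + (np/μ)*(P/(np*up)) = (P+Q)/(μ*up) := by
      field_simp; ring
    rw [heq]; exact div_neg_of_neg_of_pos hPQ hμu
  have hst : 0 ≤ (P/(μ*up))*(Q/(np*up)) - (np/μ)*(μ/np) - np/μ →
      P/(μ*up) + Q/(np*up) < 0 := by
    intro htt
    have h1' : (np/μ)*(μ/np) = 1 := by field_simp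
    have h2' : 0 < np/μ := div_pos hnp hμ
    have h3' : 0 < (P/(μ*up))*(Q/(np*up)) := by rw [h1'] at htt; linarith
    have h4' : 0 < P*Q := by
      rw [div_mul_div_comm] at h3'
      have hd : 0 < (μ*up)*(np*up) := mul_pos hμu hnu
      rcases div_pos_iff.mp h3' with ⟨hnum, _⟩ | ⟨_, hden⟩
      · exact hnum
      · linarith
    have hPneg : P < 0 := by
      by_contra h; push_neg at h
      have hQQ : Q < 0 := by nlinarith
      nlinarith
    have hQneg : Q < 0 := by
      by_contra h; push_neg at h; nlinarith
    have d1 : P/(μ*up) < 0 := div_neg_of_neg_of_pos hPneg hμu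
    have d2 : Q/(np*up) < 0 := div_neg_of_neg_of_pos hQneg hnu
    linarith
  obtain ⟨l1, l2, l3, hfac, ha, hb, hc, hd⟩ :=
    cubic_two_neg_one_pos (P/(μ*up) + Q/(np*up))
      ((P/(μ*up))*(Q/(np*up)) - (np/μ)*(μ/np) - np/μ)
      ((np/μ)*(Q/(np*up)) + (np/μ)*(P/(np*up))) hrneg hst
  refine ⟨l1, l2, l3, ?_, ha, hb, hc, hd⟩
  have hmap : (Jplus ρp np up μ A1 A2 γ α).map Complex.ofReal
      = (Jplus ρp np up μ A1 A2 γ α).map (algebraMap ℝ ℂ) := rfl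
  rw [hmap, Matrix.charpoly_map]
  have hcp := Jplus_charpoly ρp np up μ A1 A2 γ α
  rw [← hPdef, ← hQdef] at hcp
  rw [hcp]; exact hfac
end

section
/- Let ρ₊, n₊, u₊, μ, A₁, A₂ > 0 and γ, α ≥ 1, and let J₊ be the 3×3 real matrix with rows (0, 1, 0), (n₊/μ, (ρ₊u₊² − A₁γρ₊^γ)/(μu₊), −n₊/μ), and ((ρ₊u₊² − A₁γρ₊^γ)/(n₊u₊), −μ/n₊, (n₊u₊² − A₂αn₊^α)/(n₊u₊)). Suppose the sonic condition M₊ = 1 holds, i.e. (ρ₊ + n₊)u₊² = A₁γρ₊^γ + A₂αn₊^α. Then 0 is an eigenvalue of J₊, and the other two eigenvalues λ₁, λ₂ are real and satisfy λ₁ > 0 > λ₂; moreover λ₁λ₂ = (ρ₊/(μu₊²))(u₊² − A₁γρ₊^{γ−1})(u₊² − A₂αn₊^{α−1}) − (1 + n₊/μ) < 0 and λ₁ + λ₂ = (ρ₊/μ)(u₊² − A₁γρ₊^{γ−1})/u₊ + (u₊² − A₂αn₊^{α−1})/u₊. -/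
open Polynomial

/-- Characteristic polynomial of a general real 3×3 matrix. -/
lemma charpoly_fin3 (M : Matrix (Fin 3) (Fin 3) ℝ) :
    M.charpoly = X^3 - C (M 0 0 + M 1 1 + M 2 2) * X^2
      + C (M 0 0 * M 1 1 + M 0 0 * M 2 2 + M 1 1 * M 2 2
           - M 0 1 * M 1 0 - M 0 2 * M 2 0 - M 1 2 * M 2 1) * X
      - C (M 0 0 * M 1 1 * M 2 2 - M 0 0 * M 1 2 * M 2 1 - M 0 1 * M 1 0 * M 2 2
           + M 0 1 * M 1 2 * M 2 0 + M 0 2 * M 1 0 * M 2 1 - M 0 2 * M 1 1 * M 2 0) := by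
  rw [Matrix.charpoly, Matrix.det_fin_three]
  rw [Matrix.charmatrix_apply_eq, Matrix.charmatrix_apply_eq, Matrix.charmatrix_apply_eq,
    Matrix.charmatrix_apply_ne _ _ _ (by decide), Matrix.charmatrix_apply_ne _ _ _ (by decide),
    Matrix.charmatrix_apply_ne _ _ _ (by decide), Matrix.charmatrix_apply_ne _ _ _ (by decide),
    Matrix.charmatrix_apply_ne _ _ _ (by decide), Matrix.charmatrix_apply_ne _ _ _ (by decide)]
  simp only [map_add, map_mul, map_sub, map_neg]
  ring

set_option maxHeartbeats 1000000 in
/-- in the sonic case M₊ = 1 the eigenvalues of J₊ are 0 and two real numbers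
λ₁ > 0 > λ₂, whose product and sum are given explicitly. -/
theorem stmt7 (ρp np up μ A1 A2 γ α : ℝ)
    (hρp : 0 < ρp) (hnp : 0 < np) (hup : 0 < up) (hμ : 0 < μ)
    (hA1 : 0 < A1) (hA2 : 0 < A2) (hγ : 1 ≤ γ) (hα : 1 ≤ α)
    (hsonic : (ρp + np) * up ^ 2 = A1 * γ * ρp ^ γ + A2 * α * np ^ α) :
    ∃ l1 l2 : ℝ,
      (Jplus ρp np up μ A1 A2 γ α).charpoly = X * (X - C l1) * (X - C l2) ∧
      0 < l1 ∧ l2 < 0 ∧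
      l1 * l2 = (ρp / (μ * up ^ 2)) * (up ^ 2 - A1 * γ * ρp ^ (γ - 1))
          * (up ^ 2 - A2 * α * np ^ (α - 1)) - (1 + np / μ) ∧
      l1 * l2 < 0 ∧
      l1 + l2 = (ρp / μ) * (up ^ 2 - A1 * γ * ρp ^ (γ - 1)) / up
          + (up ^ 2 - A2 * α * np ^ (α - 1)) / up := by
  have hργ : ρp ^ γ = ρp ^ (γ - 1) * ρp := by
    rw [← Real.rpow_add_one hρp.ne']; ring_nf
  have hnα : np ^ α = np ^ (α - 1) * np := by
    rw [← Real.rpow_add_one hnp.ne']; ring_nf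
  set P : ℝ := A1 * γ * ρp ^ (γ - 1) with hP
  set Q : ℝ := A2 * α * np ^ (α - 1) with hQ
  clear_value P Q
  have hPγ : A1 * γ * ρp ^ γ = ρp * P := by rw [hργ, hP]; ring
  have hQα : A2 * α * np ^ α = np * Q := by rw [hnα, hQ]; ring
  -- sonic condition in terms of P, Q
  have hson : ρp * (up ^ 2 - P) = np * (Q - up ^ 2) := by
    rw [hPγ, hQα] at hsonic; nlinarith [hsonic]
  set s : ℝ := (ρp / μ) * (up ^ 2 - P) / up + (up ^ 2 - Q) / up with hs_def
  set p : ℝ := (ρp / (μ * up ^ 2)) * (up ^ 2 - P) * (up ^ 2 - Q) - (1 + np / μ) with hp_def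
  clear_value s p
  have hupn := hup.ne'
  have hμn := hμ.ne'
  have hnpn := hnp.ne'
  have hρpn := hρp.ne'
  -- p < 0
  have hp_neg : p < 0 := by
    have h1 : ρp * ((up ^ 2 - P) * (up ^ 2 - Q)) = -(np * (up ^ 2 - Q) ^ 2) := by
      linear_combination (up ^ 2 - Q) * hson
    have h2 : (ρp / (μ * up ^ 2)) * (up ^ 2 - P) * (up ^ 2 - Q)
        = -(np * (up ^ 2 - Q) ^ 2) / (μ * up ^ 2) := by
      rw [div_mul_eq_mul_div, div_mul_eq_mul_div, ← h1]; ring_nf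
    rw [hp_def, h2]
    have hd : 0 < μ * up ^ 2 := by positivity
    have h3 : -(np * (up ^ 2 - Q) ^ 2) / (μ * up ^ 2) ≤ 0 := by
      apply div_nonpos_of_nonpos_of_nonneg (by nlinarith [sq_nonneg (up ^ 2 - Q)]) hd.le
    have h4 : 0 < 1 + np / μ := by positivity
    linarith
  -- discriminant
  set D : ℝ := s ^ 2 - 4 * p with hD_def
  clear_value D
  have hDpos : s ^ 2 < D := by rw [hD_def]; linarith
  have hDnn : 0 ≤ D := by nlinarith [sq_nonneg s]
  have hsq : Real.sqrt D ^ 2 = D := Real.sq_sqrt hDnn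
  have hsqrt_gt : |s| < Real.sqrt D := by
    have h0 : 0 ≤ Real.sqrt D := Real.sqrt_nonneg D
    nlinarith [sq_abs s]
  refine ⟨(s + Real.sqrt D) / 2, (s - Real.sqrt D) / 2, ?_, ?_, ?_, ?_, ?_, ?_⟩
  · -- charpoly factorization
    rw [charpoly_fin3]
    simp only [Jplus, Matrix.cons_val', Matrix.cons_val_zero, Matrix.cons_val_one,
      Matrix.head_cons, Matrix.empty_val', Matrix.cons_val_fin_one, Matrix.head_fin_const,
      Matrix.cons_val_two, Matrix.tail_cons, Matrix.of_apply]
    set a : ℝ := (ρp * up ^ 2 - A1 * γ * ρp ^ γ) / (μ * up) with ha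
    set c : ℝ := (ρp * up ^ 2 - A1 * γ * ρp ^ γ) / (np * up) with hc
    set e : ℝ := (np * up ^ 2 - A2 * α * np ^ α) / (np * up) with he
    clear_value a c e
    have ha' : a = (ρp / μ) * (up ^ 2 - P) / up := by
      rw [ha, hPγ]; field_simp
    have he' : e = (up ^ 2 - Q) / up := by
      rw [he, hQα]; field_simp
    have hce : c = -e := by
      have hnum : ρp * up ^ 2 - ρp * P = -(np * up ^ 2 - np * Q) := by
        linear_combination hson
      rw [hc, he, hPγ, hQα, hnum, neg_div]
    have htrace : 0 + a + e = s := by rw [hs_def, ha', he']; ring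
    have hsum2 : 0 * a + 0 * e + a * e - 1 * (np / μ) - 0 * c - -(np / μ) * -(μ / np) = p := by
      have hae : a * e = (ρp / (μ * up ^ 2)) * (up ^ 2 - P) * (up ^ 2 - Q) := by
        rw [ha', he']; field_simp
      have hbd : -(np / μ) * -(μ / np) = 1 := by field_simp
      rw [hae, hbd, hp_def]; ring
    have hdet : 0 * a * e - 0 * -(np / μ) * -(μ / np) - 1 * (np / μ) * e
        + 1 * -(np / μ) * c + 0 * (np / μ) * -(μ / np) - 0 * a * c = 0 := by
      rw [hce]; ring
    rw [htrace, hsum2, hdet]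
    have hsum : (s + Real.sqrt D) / 2 + (s - Real.sqrt D) / 2 = s := by ring
    have hprod : (s + Real.sqrt D) / 2 * ((s - Real.sqrt D) / 2) = p := by
      have : (s + Real.sqrt D) / 2 * ((s - Real.sqrt D) / 2)
          = (s ^ 2 - Real.sqrt D ^ 2) / 4 := by ring
      rw [this, hsq, hD_def]; ring
    rw [← hsum, ← hprod]
    simp only [map_add, map_mul, map_sub, map_zero]
    ring
  · -- l1 > 0
    have := abs_lt.mp hsqrt_gt
    linarith [this.1]
  · -- l2 < 0
    have := abs_lt.mp hsqrt_gt
    linarith [this.2]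
  · -- product formula
    have : (s + Real.sqrt D) / 2 * ((s - Real.sqrt D) / 2)
        = (s ^ 2 - Real.sqrt D ^ 2) / 4 := by ring
    rw [this, hsq, hD_def, hp_def]; ring
  · -- product negative
    have h : (s + Real.sqrt D) / 2 * ((s - Real.sqrt D) / 2)
        = (s ^ 2 - Real.sqrt D ^ 2) / 4 := by ring
    rw [h, hsq, hD_def]; linarith
  · -- sum formula
    rw [hs_def]; ring
end

section
/- For every c₀ > 0 there exists a constant C > 0 depending only on c₀ such that for every continuously differentiable function ψ : [0,∞) → ℝ with ∫₀^∞ ψ'(x)² dx < ∞, one has ∫₀^∞ e^{−c₀x} ψ(x)² dx ≤ C ( ψ(0)² + ∫₀^∞ ψ'(x)² dx ). Consequently, for every δ > 0, δ∫₀^∞ e^{−c₀x} ψ(x)² dx ≤ Cδ( ψ(0)² + ∫₀^∞ ψ'(x)² dx ). -/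
/-! By the fundamental theorem of calculus and Cauchy–Schwarz (here Jensen for `x ↦ x²`),
`(ψ x - ψ 0)² ≤ x ∫₀^∞ ψ'²`, hence `ψ x² ≤ 2 ψ(0)² + 2x ∫₀^∞ ψ'²`. Integrating against
`e^{-c₀x}`, with `∫₀^∞ e^{-c₀x} = 1/c₀` and `∫₀^∞ x e^{-c₀x} = Γ(2)/c₀² = 1/c₀²`, gives the
inequality with `C = 2/c₀ + 2/c₀²`. -/

open MeasureTheory Set Real

theorem sq_integral_le_measureReal_mul_integral_sq {α : Type*} [MeasurableSpace α]
    {μ : Measure α} [IsFiniteMeasure μ] {g : α → ℝ} (hg : Integrable g μ)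
    (hg2 : Integrable (fun x => g x ^ 2) μ) :
    (∫ x, g x ∂μ) ^ 2 ≤ μ.real univ * ∫ x, g x ^ 2 ∂μ := by
  rcases eq_zero_or_neZero μ with rfl | _
  · simp
  have hm : 0 < μ.real univ := measureReal_univ_pos
  have jensen : (⨍ x, g x ∂μ) ^ 2 ≤ ⨍ x, g x ^ 2 ∂μ :=
    (even_two.convexOn_pow (𝕜 := ℝ)).map_average_le (continuous_pow 2).continuousOn isClosed_univ
      (.of_forall fun x => mem_univ (g x)) hg hg2
  rw [average_eq, average_eq, smul_eq_mul, smul_eq_mul, mul_pow,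
    ← le_div_iff₀' (by positivity)] at jensen
  calc (∫ x, g x ∂μ) ^ 2 ≤ (μ.real univ)⁻¹ * (∫ x, g x ^ 2 ∂μ) / (μ.real univ)⁻¹ ^ 2 := jensen
    _ = μ.real univ * ∫ x, g x ^ 2 ∂μ := by field_simp

theorem sq_sub_le_mul_integral_sq_of_hasDerivAt {f f' : ℝ → ℝ} {a b : ℝ} (hab : a ≤ b)
    (hf : ∀ t ∈ Icc a b, HasDerivAt f (f' t) t) (hf' : ContinuousOn f' (Icc a b)) :
    (f b - f a) ^ 2 ≤ (b - a) * ∫ t in a..b, f' t ^ 2 := by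
  have hint : IntegrableOn f' (Ioc a b) := (hf'.integrableOn_Icc).mono_set Ioc_subset_Icc_self
  have hint2 : IntegrableOn (fun t => f' t ^ 2) (Ioc a b) :=
    ((hf'.pow 2).integrableOn_Icc).mono_set Ioc_subset_Icc_self
  have ftc : ∫ t in a..b, f' t = f b - f a :=
    intervalIntegral.integral_eq_sub_of_hasDerivAt (by rwa [uIcc_of_le hab])
      ((intervalIntegrable_iff_integrableOn_Ioc_of_le hab).2 hint)
  have : IsFiniteMeasure (volume.restrict (Ioc a b)) := by
    rw [isFiniteMeasure_restrict]; exact measure_Ioc_lt_top.ne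
  rw [← ftc, intervalIntegral.integral_of_le hab, intervalIntegral.integral_of_le hab]
  simpa [measureReal_restrict_apply_univ, Real.volume_real_Ioc_of_le hab] using
    sq_integral_le_measureReal_mul_integral_sq hint hint2

theorem integral_exp_neg_mul_Ioi_zero {c : ℝ} (hc : 0 < c) :
    ∫ x in Ioi 0, exp (-c * x) = 1 / c := by
  rw [integral_exp_mul_Ioi (neg_lt_zero.2 hc), mul_zero, exp_zero, neg_div_neg_eq]

theorem integral_mul_exp_neg_mul_Ioi_zero {c : ℝ} (hc : 0 < c) :
    ∫ x in Ioi 0, x * exp (-c * x) = 1 / c ^ 2 := by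
  simpa [Real.Gamma_two, neg_mul, show (2 : ℝ) - 1 = 1 by norm_num] using
    integral_rpow_mul_exp_neg_mul_Ioi two_pos hc

theorem integral_exp_neg_mul_mul_sq_le {c : ℝ} (hc : 0 < c) {f : ℝ → ℝ} (hf : ContDiff ℝ 1 f)
    (hf' : IntegrableOn (fun x => deriv f x ^ 2) (Ioi 0)) :
    ∫ x in Ioi 0, exp (-c * x) * f x ^ 2
      ≤ 2 / c * f 0 ^ 2 + 2 / c ^ 2 * ∫ x in Ioi 0, deriv f x ^ 2 := by
  set I := ∫ x in Ioi 0, deriv f x ^ 2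
  have pointwise : ∀ x ∈ Ioi (0 : ℝ), f x ^ 2 ≤ 2 * f 0 ^ 2 + 2 * I * x := by
    intro x (hx : 0 < x)
    replace hx := hx.le
    have ftc := sq_sub_le_mul_integral_sq_of_hasDerivAt hx
      (fun t _ => (hf.differentiable one_ne_zero t).hasDerivAt)
      (hf.continuous_deriv le_rfl).continuousOn
    have tail : ∫ t in 0..x, deriv f t ^ 2 ≤ I := by
      rw [intervalIntegral.integral_of_le hx]
      exact setIntegral_mono_set hf' (.of_forall fun _ => sq_nonneg _)
        Ioc_subset_Ioi_self.eventuallyLE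
    have increment : (f x - f 0) ^ 2 ≤ I * x := by
      rw [sub_zero] at ftc
      linarith [mul_le_mul_of_nonneg_left tail hx]
    nlinarith [sq_nonneg (f x - 2 * f 0)]
  have hexp : IntegrableOn (fun x => exp (-c * x)) (Ioi 0) := exp_neg_integrableOn_Ioi 0 hc
  have hmul : IntegrableOn (fun x => x * exp (-c * x)) (Ioi 0) :=
    Integrable.of_integral_ne_zero (by rw [integral_mul_exp_neg_mul_Ioi_zero hc]; positivity)
  calc ∫ x in Ioi 0, exp (-c * x) * f x ^ 2
      ≤ ∫ x in Ioi 0, 2 * f 0 ^ 2 * exp (-c * x) + 2 * I * (x * exp (-c * x)) := by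
        refine integral_mono_of_nonneg (.of_forall fun x => by positivity)
          ((hexp.const_mul _).add (hmul.const_mul _)) ?_
        refine (ae_restrict_iff' measurableSet_Ioi).2 (.of_forall fun x hx => ?_)
        calc exp (-c * x) * f x ^ 2 ≤ exp (-c * x) * (2 * f 0 ^ 2 + 2 * I * x) :=
              mul_le_mul_of_nonneg_left (pointwise x hx) (exp_pos _).le
          _ = _ := by ring
    _ = 2 / c * f 0 ^ 2 + 2 / c ^ 2 * I := by
        rw [integral_add (hexp.const_mul _) (hmul.const_mul _), integral_const_mul,
          integral_const_mul, integral_exp_neg_mul_Ioi_zero hc,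
          integral_mul_exp_neg_mul_Ioi_zero hc]
        ring

/-- first inequality of Lemma 3.1: a weighted Poincaré-type inequality with
exponential weight on the half line. -/
theorem stmt11 (c₀ : ℝ) (hc₀ : 0 < c₀) :
    ∃ C : ℝ, 0 < C ∧
      ∀ ψ : ℝ → ℝ, ContDiff ℝ 1 ψ →
        IntegrableOn (fun x => (deriv ψ x) ^ 2) (Set.Ioi 0) →
        (∫ x in Set.Ioi (0:ℝ), Real.exp (-c₀ * x) * (ψ x) ^ 2)
          ≤ C * ((ψ 0) ^ 2 + ∫ x in Set.Ioi (0:ℝ), (deriv ψ x) ^ 2) ∧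
        ∀ δ : ℝ, 0 < δ →
          δ * (∫ x in Set.Ioi (0:ℝ), Real.exp (-c₀ * x) * (ψ x) ^ 2)
            ≤ C * δ * ((ψ 0) ^ 2 + ∫ x in Set.Ioi (0:ℝ), (deriv ψ x) ^ 2) := by
  refine ⟨2 / c₀ + 2 / c₀ ^ 2, by positivity, fun ψ hψ hψ' => ?_⟩
  have weighted : ∫ x in Ioi 0, exp (-c₀ * x) * ψ x ^ 2
      ≤ (2 / c₀ + 2 / c₀ ^ 2) * (ψ 0 ^ 2 + ∫ x in Ioi 0, deriv ψ x ^ 2) := by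
    have : 0 ≤ 2 / c₀ * (∫ x in Ioi 0, deriv ψ x ^ 2) + 2 / c₀ ^ 2 * ψ 0 ^ 2 := by positivity
    linarith [integral_exp_neg_mul_mul_sq_le hc₀ hψ hψ']
  refine ⟨weighted, fun δ hδ => ?_⟩
  calc δ * ∫ x in Ioi 0, exp (-c₀ * x) * ψ x ^ 2
      ≤ δ * ((2 / c₀ + 2 / c₀ ^ 2) * (ψ 0 ^ 2 + ∫ x in Ioi 0, deriv ψ x ^ 2)) :=
        mul_le_mul_of_nonneg_left weighted hδ.le
    _ = _ := by ring
end

section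
/- Let A₁, A₂ > 0, γ, α ≥ 1, ρ₊, n₊, u₊ > 0, and write p₁'(ρ₊) = A₁γρ₊^{γ−1}, p₁''(ρ₊) = A₁γ(γ−1)ρ₊^{γ−2}, p₂'(n₊) = A₂αn₊^{α−1}, p₂''(n₊) = A₂α(α−1)n₊^{α−2}. Assume the sonic condition (ρ₊ + n₊)u₊² = A₁γρ₊^γ + A₂αn₊^α and the pressure condition |p₁'(ρ₊) − p₂'(n₊)| ≤ √2 u₊ · min{ (1 + ρ₊/n₊)((γ−1)p₁'(ρ₊))^{1/2}, (1 + n₊/ρ₊)((α−1)p₂'(n₊))^{1/2} }. Then for all real numbers φ, ψ: ρ₊ψ² + (p₁''(ρ₊)/2)φ² + ((u₊² − p₁'(ρ₊))/u₊)φψ ≥ 0, and for all real numbers φ̄, ψ̄: n₊ψ̄² + (p₂''(n₊)/2)φ̄² + ((u₊² − p₂'(n₊))/u₊)φ̄ψ̄ ≥ 0. -/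
lemma quad_nonneg (a b c : ℝ) (ha : 0 < a) (h : b ^ 2 ≤ 4 * a * c) (φ ψ : ℝ) :
    0 ≤ a * ψ ^ 2 + c * φ ^ 2 + b * φ * ψ := by
  nlinarith [sq_nonneg (2 * a * ψ + b * φ), sq_nonneg φ, sq_nonneg ψ]

lemma branch (A γ ρ n up P Q : ℝ) (hA : 0 < A) (hγ : 1 ≤ γ) (hρ : 0 < ρ) (hn : 0 < n)
    (hup : 0 < up) (hP : P = A * γ * ρ ^ (γ - 1))
    (hsonic : (ρ + n) * up ^ 2 = ρ * P + n * Q)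
    (hpr : |P - Q| ≤ Real.sqrt 2 * up * ((1 + ρ / n) * Real.sqrt ((γ - 1) * P))) :
    ∀ φ ψ : ℝ,
      0 ≤ ρ * ψ ^ 2 + (A * γ * (γ - 1) * ρ ^ (γ - 2) / 2) * φ ^ 2
          + ((up ^ 2 - P) / up) * φ * ψ := by
  have hγ0 : 0 < γ := by linarith
  have hPpos : 0 < P := by rw [hP]; positivity
  have hkey : (γ - 1) * P ≥ 0 := by nlinarith
  -- square of pressure condition
  have hsq : (P - Q) ^ 2 ≤ 2 * up ^ 2 * (1 + ρ / n) ^ 2 * ((γ - 1) * P) := by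
    have h2 : (Real.sqrt 2) ^ 2 = 2 := Real.sq_sqrt (by norm_num)
    have h3 : (Real.sqrt ((γ - 1) * P)) ^ 2 = (γ - 1) * P := Real.sq_sqrt hkey
    have habs := mul_self_le_mul_self (abs_nonneg (P - Q)) hpr
    have : (P - Q) ^ 2 ≤ (Real.sqrt 2 * up * ((1 + ρ / n) * Real.sqrt ((γ - 1) * P))) ^ 2 := by
      nlinarith [habs, sq_abs (P - Q)]
    calc (P - Q) ^ 2 ≤ _ := this
      _ = 2 * up ^ 2 * (1 + ρ / n) ^ 2 * ((γ - 1) * P) := by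
          rw [show (Real.sqrt 2 * up * ((1 + ρ / n) * Real.sqrt ((γ - 1) * P))) ^ 2
            = (Real.sqrt 2) ^ 2 * up ^ 2 * (1 + ρ / n) ^ 2 * (Real.sqrt ((γ - 1) * P)) ^ 2 by ring,
            h2, h3]
  have hrat : 1 + ρ / n = (ρ + n) / n := by field_simp; ring
  have hsq' : n ^ 2 * (P - Q) ^ 2 ≤ 2 * up ^ 2 * (ρ + n) ^ 2 * ((γ - 1) * P) := by
    rw [hrat] at hsq
    have hn2 : (0:ℝ) < n ^ 2 := by positivity
    have := mul_le_mul_of_nonneg_left hsq (le_of_lt hn2)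
    calc n ^ 2 * (P - Q) ^ 2 ≤ n ^ 2 * (2 * up ^ 2 * ((ρ + n) / n) ^ 2 * ((γ - 1) * P)) := this
      _ = 2 * up ^ 2 * (ρ + n) ^ 2 * ((γ - 1) * P) := by field_simp
  -- identity from sonic condition
  have hid : (ρ + n) * (up ^ 2 - P) = n * (Q - P) := by linarith [hsonic]
  have hkey1 : (up ^ 2 - P) ^ 2 ≤ 2 * ((γ - 1) * P) * up ^ 2 := by
    have h1 : ((ρ + n) * (up ^ 2 - P)) ^ 2 = n ^ 2 * (Q - P) ^ 2 := by rw [hid]; ring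
    have hρn : (0:ℝ) < (ρ + n) ^ 2 := by positivity
    nlinarith [hsq', sq_nonneg (P - Q)]
  -- quadratic form: a = ρ, c = (γ-1)*P/(2ρ), b = (up²-P)/up
  have hc : A * γ * (γ - 1) * ρ ^ (γ - 2) / 2 = (γ - 1) * P / (2 * ρ) := by
    have h2 : ρ ^ (γ - 2) = ρ ^ (γ - 1) / ρ := by
      rw [show γ - 2 = (γ - 1) - 1 by ring, Real.rpow_sub hρ, Real.rpow_one]
    rw [hP, h2]; field_simp
  have hb : ((up ^ 2 - P) / up) ^ 2 ≤ 4 * ρ * ((γ - 1) * P / (2 * ρ)) := by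
    rw [div_pow, div_le_iff₀ (by positivity : (0:ℝ) < up ^ 2)]
    have : 4 * ρ * ((γ - 1) * P / (2 * ρ)) = 2 * ((γ - 1) * P) := by field_simp; ring
    rw [this]; exact hkey1
  intro φ ψ
  rw [hc]
  exact quad_nonneg ρ _ _ hρ hb φ ψ

/-- under the sonic condition and the pressure condition, the two leading
quadratic forms of the energy production terms are positive semidefinite. Here
p₁'(ρ₊) = A₁γρ₊^{γ−1}, p₁''(ρ₊) = A₁γ(γ−1)ρ₊^{γ−2}, p₂'(n₊) = A₂αn₊^{α−1},
p₂''(n₊) = A₂α(α−1)n₊^{α−2}. -/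
theorem stmt14 (A1 A2 γ α ρp np up : ℝ)
    (hA1 : 0 < A1) (hA2 : 0 < A2) (hγ : 1 ≤ γ) (hα : 1 ≤ α)
    (hρp : 0 < ρp) (hnp : 0 < np) (hup : 0 < up)
    (hsonic : (ρp + np) * up ^ 2 = A1 * γ * ρp ^ γ + A2 * α * np ^ α)
    (hpressure : |A1 * γ * ρp ^ (γ - 1) - A2 * α * np ^ (α - 1)|
      ≤ Real.sqrt 2 * up *
        min ((1 + ρp / np) * Real.sqrt ((γ - 1) * (A1 * γ * ρp ^ (γ - 1))))
            ((1 + np / ρp) * Real.sqrt ((α - 1) * (A2 * α * np ^ (α - 1))))) :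
    (∀ φ ψ : ℝ,
      0 ≤ ρp * ψ ^ 2 + (A1 * γ * (γ - 1) * ρp ^ (γ - 2) / 2) * φ ^ 2
          + ((up ^ 2 - A1 * γ * ρp ^ (γ - 1)) / up) * φ * ψ) ∧
    (∀ φb ψb : ℝ,
      0 ≤ np * ψb ^ 2 + (A2 * α * (α - 1) * np ^ (α - 2) / 2) * φb ^ 2
          + ((up ^ 2 - A2 * α * np ^ (α - 1)) / up) * φb * ψb) := by
  set P := A1 * γ * ρp ^ (γ - 1) with hPdef
  set Q := A2 * α * np ^ (α - 1) with hQdef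
  have hργ : ρp ^ γ = ρp ^ (γ - 1) * ρp := by
    have := Real.rpow_add hρp (γ - 1) 1
    simpa using this
  have hnα : np ^ α = np ^ (α - 1) * np := by
    have := Real.rpow_add hnp (α - 1) 1
    simpa using this
  have hsonic' : (ρp + np) * up ^ 2 = ρp * P + np * Q := by
    rw [hsonic, hργ, hnα, hPdef, hQdef]; ring
  have hup2 : 0 ≤ Real.sqrt 2 * up := by positivity
  constructor
  · refine branch A1 γ ρp np up P Q hA1 hγ hρp hnp hup hPdef hsonic' ?_
    exact hpressure.trans (mul_le_mul_of_nonneg_left (min_le_left _ _) hup2)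
  · refine branch A2 α np ρp up Q P hA2 hα hnp hρp hup hQdef (by linarith [hsonic']) ?_
    rw [abs_sub_comm]
    exact hpressure.trans (mul_le_mul_of_nonneg_left (min_le_right _ _) hup2)
end
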